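/- arXiv:2511.08834 — 4 statements merged into one kernel-verified Lean document; each statement's English description precedes it below -/
import Mathlib

section
/- Let 0 < r < 1, 0 < R < 1, and let f : A_{1,r} → A_{1,R} be a proper holomorphic map. Then there exist an integer d ≥ 1 and θ ∈ ℝ such that R = r^d and either f(z) = e^{iθ}·z^d for all z ∈ A_{1,r}, or f(z) = r^d·e^{iθ}·z^{−d} for all z ∈ A_{1,r}. -/
noncomputable section

/-- The annulus `A_{1,r} = { z ∈ ℂ : r < |z| < 1 }`. -/
def ann1 (r : ℝ) : Set ℂ := {z | r < ‖z‖ ∧ ‖z‖ < 1}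

/-- `f` is proper as a map from `S` to `T`: preimages (within `S`) of compact subsets
of `T` are compact. -/
def ProperOn {X Y : Type*} [TopologicalSpace X] [TopologicalSpace Y]
    (f : X → Y) (S : Set X) (T : Set Y) : Prop :=
  ∀ K : Set Y, K ⊆ T → IsCompact K → IsCompact (S ∩ f ⁻¹' K)

open Complex Set Metric Filter


lemma annGen_isPreconnected {a b : ℝ} (ha : 0 ≤ a) :
    IsPreconnected {z : ℂ | a < ‖z‖ ∧ ‖z‖ < b} := by
  have : {z : ℂ | a < ‖z‖ ∧ ‖z‖ < b} =
      (fun p : ℝ × ℝ => (p.1 : ℂ) * Complex.exp (p.2 * Complex.I)) '' (Set.Ioo a b ×ˢ Set.univ) := by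
    ext z
    constructor
    · rintro ⟨h1, h2⟩
      exact ⟨⟨‖z‖, Complex.arg z⟩, ⟨⟨h1, h2⟩, trivial⟩, by
        simpa using Complex.abs_mul_exp_arg_mul_I z⟩
    · rintro ⟨⟨s, θ⟩, ⟨⟨hs1, hs2⟩, -⟩, rfl⟩
      have h0 : (0:ℝ) ≤ s := le_trans ha hs1.le
      have : ‖(s : ℂ) * Complex.exp (θ * Complex.I)‖ = s := by
        rw [norm_mul, Complex.norm_exp]
        simp [Complex.norm_real, _root_.abs_of_nonneg h0]
      simp only [Set.mem_setOf_eq, this]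
      exact ⟨hs1, hs2⟩
  rw [this]
  exact ((isPreconnected_Ioo.prod isPreconnected_univ).image _
    (Continuous.continuousOn (by continuity)))

lemma annulus_maxmod {r : ℝ} (hr0 : 0 < r) (hr1 : r < 1) {g : ℂ → ℂ}
    (hg : DifferentiableOn ℂ g (ann1 r)) {C : ℝ}
    (hC : ∀ ε > (0:ℝ), ∃ δ > (0:ℝ), ∀ z ∈ ann1 r,
      (1 - δ < ‖z‖ ∨ ‖z‖ < r + δ) → ‖g z‖ ≤ C + ε) :
    ∀ z ∈ ann1 r, ‖g z‖ ≤ C := by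
  intro z hz
  refine le_of_forall_pos_le_add ?_
  intro ε hε
  obtain ⟨δ, hδ, hcol⟩ := hC ε hε
  obtain ⟨hzr, hz1⟩ := hz
  set t : ℝ := max (1 - δ/2) ((1 + ‖z‖)/2) with ht
  set s : ℝ := min (r + δ/2) ((r + ‖z‖)/2) with hs
  have hzt : ‖z‖ < t := lt_of_lt_of_le (by linarith) (le_max_right _ _)
  have ht1 : t < 1 := by
    apply max_lt <;> linarith
  have htδ : 1 - δ < t := lt_of_lt_of_le (by linarith) (le_max_left _ _)
  have hsz : s < ‖z‖ := lt_of_le_of_lt (min_le_right _ _) (by linarith)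
  have hrs : r < s := by
    apply lt_min <;> linarith
  have hsδ : s < r + δ := lt_of_le_of_lt (min_le_left _ _) (by linarith)
  have hs0 : 0 < s := lt_trans hr0 hrs
  set U : Set ℂ := ball 0 t \ closedBall 0 s with hU
  have hUb : Bornology.IsBounded U := (isBounded_ball).subset diff_subset
  have hclosU : closure U ⊆ ann1 r := by
    intro w hw
    have h1 : w ∈ closure (ball (0:ℂ) t) :=
      closure_mono diff_subset hw
    have h2 : w ∈ closure ((closedBall (0:ℂ) s)ᶜ) := by
      refine closure_mono ?_ hw
      intro x hx
      exact hx.2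
    rw [closure_ball _ (by positivity : t ≠ 0)] at h1
    have h2' : w ∈ (interior (closedBall (0:ℂ) s))ᶜ := by
      rwa [closure_compl] at h2
    rw [interior_closedBall _ (by positivity : s ≠ 0)] at h2'
    simp only [mem_closedBall, mem_ball, mem_compl_iff, not_lt, dist_zero_right] at h1 h2'
    exact ⟨lt_of_lt_of_le hrs h2', lt_of_le_of_lt h1 ht1⟩
  have hdc : DiffContOnCl ℂ g U :=
    DifferentiableOn.diffContOnCl (hg.mono hclosU)
  have hfr : ∀ w ∈ frontier U, ‖g w‖ ≤ C + ε := by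
    intro w hw
    have hw' : w ∈ frontier (ball (0:ℂ) t) ∪ frontier (closedBall (0:ℂ) s) := by
      have hw2 : w ∈ frontier (ball (0:ℂ) t ∩ (closedBall (0:ℂ) s)ᶜ) := by
        rwa [← diff_eq]
      rcases frontier_inter_subset (ball (0:ℂ) t) ((closedBall (0:ℂ) s)ᶜ) hw2 with h | h
      · exact Or.inl h.1
      · refine Or.inr ?_
        have := h.2
        rwa [frontier_compl] at this
    rw [frontier_ball _ (by positivity : t ≠ 0), frontier_closedBall _ (by positivity : s ≠ 0)]
      at hw'
    simp only [mem_union, mem_sphere_iff_norm, sub_zero] at hw'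
    rcases hw' with h | h
    · refine hcol w ⟨?_, ?_⟩ (Or.inl ?_) <;> rw [h]
      · exact lt_trans hrs (lt_trans hsz hzt)
      · exact ht1
      · exact htδ
    · refine hcol w ⟨?_, ?_⟩ (Or.inr ?_) <;> rw [h]
      · exact hrs
      · exact lt_trans (lt_trans hsz hzt) ht1
      · exact hsδ
  have hzU : z ∈ U := by
    constructor
    · simpa [mem_ball, dist_zero_right] using hzt
    · simp only [mem_closedBall, dist_zero_right, not_le]
      exact hsz
  exact Complex.norm_le_of_forall_mem_frontier_norm_le hUb hdc hfr (subset_closure hzU)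

lemma collar_escape {r R : ℝ} (hr0 : 0 < r) (hr1 : r < 1) (hR0 : 0 < R) (hR1 : R < 1)
    {f : ℂ → ℂ} (hprop : ProperOn f (ann1 r) (ann1 R)) {a b : ℝ}
    (hRa : R < a) (hab : a ≤ b) (hb1 : b < 1) :
    ∃ δ > (0:ℝ), ∀ z ∈ ann1 r, (1 - δ < ‖z‖ ∨ ‖z‖ < r + δ) →
      (‖f z‖ < a ∨ b < ‖f z‖) := by
  set K : Set ℂ := {w | a ≤ ‖w‖ ∧ ‖w‖ ≤ b} with hK
  have hKc : IsCompact K := by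
    have hcl : IsClosed K := by
      have h1 : IsClosed {w : ℂ | a ≤ ‖w‖} := isClosed_le continuous_const continuous_norm
      have h2 : IsClosed {w : ℂ | ‖w‖ ≤ b} := isClosed_le continuous_norm continuous_const
      exact h1.inter h2
    have hbd : Bornology.IsBounded K := by
      apply (isBounded_closedBall (x := (0:ℂ)) (r := b)).subset
      intro w hw
      simpa [mem_closedBall, dist_zero_right] using hw.2
    exact Metric.isCompact_of_isClosed_isBounded hcl hbd
  have hKT : K ⊆ ann1 R := fun w hw => ⟨lt_of_lt_of_le hRa hw.1, lt_of_le_of_lt hw.2 hb1⟩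
  have hE : IsCompact (ann1 r ∩ f ⁻¹' K) := hprop K hKT hKc
  set E := ann1 r ∩ f ⁻¹' K with hEdef
  by_cases hne : E.Nonempty
  · obtain ⟨zM, hzM, hmax⟩ := hE.exists_isMaxOn hne (continuous_norm.continuousOn)
    obtain ⟨zm, hzm, hmin⟩ := hE.exists_isMinOn hne (continuous_norm.continuousOn)
    have hM1 : ‖zM‖ < 1 := hzM.1.2
    have hmr : r < ‖zm‖ := hzm.1.1
    refine ⟨min (1 - ‖zM‖) (‖zm‖ - r), by
      apply lt_min <;> linarith, fun z hz hcol => ?_⟩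
    have hzE : z ∉ E := by
      rcases hcol with h | h
      · intro hmem
        have : ‖z‖ ≤ ‖zM‖ := hmax hmem
        have : 1 - min (1 - ‖zM‖) (‖zm‖ - r) ≥ ‖zM‖ := by
          have := min_le_left (1 - ‖zM‖) (‖zm‖ - r); linarith
        linarith
      · intro hmem
        have : ‖zm‖ ≤ ‖z‖ := hmin hmem
        have : r + min (1 - ‖zM‖) (‖zm‖ - r) ≤ ‖zm‖ := by
          have := min_le_right (1 - ‖zM‖) (‖zm‖ - r); linarith
        linarith
    have : f z ∉ K := fun h => hzE ⟨hz, h⟩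
    simp only [hK, mem_setOf_eq, not_and_or, not_le] at this
    exact this
  · refine ⟨1, one_pos, fun z hz _ => ?_⟩
    have : z ∉ E := fun h => hne ⟨z, h⟩
    have : f z ∉ K := fun h => this ⟨hz, h⟩
    simp only [hK, mem_setOf_eq, not_and_or, not_le] at this
    exact this

lemma outer_dichotomy {r R : ℝ} (hr0 : 0 < r) (hr1 : r < 1) (hR0 : 0 < R) (hR1 : R < 1)
    {f : ℂ → ℂ} (hcont : ContinuousOn f (ann1 r))
    (hmaps : Set.MapsTo f (ann1 r) (ann1 R))
    (hesc : ∀ a b : ℝ, R < a → a ≤ b → b < 1 →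
      ∃ δ > (0:ℝ), ∀ z ∈ ann1 r, (1 - δ < ‖z‖ ∨ ‖z‖ < r + δ) →
        (‖f z‖ < a ∨ b < ‖f z‖)) :
    (∀ ε > (0:ℝ), ∃ δ > (0:ℝ), ∀ z ∈ ann1 r, 1 - δ < ‖z‖ → 1 - ε < ‖f z‖) ∨
    (∀ ε > (0:ℝ), ∃ δ > (0:ℝ), ∀ z ∈ ann1 r, 1 - δ < ‖z‖ → ‖f z‖ < R + ε) := by
  set ε₀ : ℝ := (1 - R)/3 with hε₀
  have hε₀pos : 0 < ε₀ := by rw [hε₀]; linarith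
  have hgap : R + ε₀ < 1 - ε₀ := by rw [hε₀]; linarith
  obtain ⟨δ₀, hδ₀, h₀⟩ := hesc (R + ε₀) (1 - ε₀) (by linarith) (by linarith) (by linarith)
  set C₀ : Set ℂ := {z : ℂ | max r (1 - δ₀) < ‖z‖ ∧ ‖z‖ < 1} with hC₀
  have hC₀sub : C₀ ⊆ ann1 r := fun z hz =>
    ⟨lt_of_le_of_lt (le_max_left _ _) hz.1, hz.2⟩
  have hC₀pre : IsPreconnected C₀ := annGen_isPreconnected (le_max_of_le_left hr0.le)
  have hC₀img : IsPreconnected ((fun z => ‖f z‖) '' C₀) :=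
    hC₀pre.image _ ((continuous_norm.comp_continuousOn (hcont.mono hC₀sub)))
  have himg_sub : (fun z => ‖f z‖) '' C₀ ⊆ Iio (R + ε₀) ∪ Ioi (1 - ε₀) := by
    rintro x ⟨z, hz, rfl⟩
    rcases h₀ z (hC₀sub hz) (Or.inl (lt_of_le_of_lt (le_max_right _ _) hz.1)) with h | h
    · exact Or.inl h
    · exact Or.inr h
  have hdisj : Disjoint (Iio (R + ε₀)) (Ioi (1 - ε₀)) := by
    rw [Set.disjoint_left]
    intro x hx hx'
    simp only [mem_Iio, mem_Ioi] at hx hx'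
    linarith
  rcases hC₀img.subset_or_subset isOpen_Iio isOpen_Ioi hdisj himg_sub with hcase | hcase
  · -- all near R on outer collar
    right
    intro ε hε
    set ε' : ℝ := min ε ε₀ with hε'
    have hε'pos : 0 < ε' := lt_min hε hε₀pos
    have hε'le : ε' ≤ ε₀ := min_le_right _ _
    obtain ⟨δ₁, hδ₁, h₁⟩ := hesc (R + ε') (1 - ε') (by linarith) (by linarith) (by linarith)
    refine ⟨min δ₀ δ₁, lt_min hδ₀ hδ₁, fun z hz hcol => ?_⟩
    have hz0 : z ∈ C₀ := ⟨max_lt hz.1 (by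
      have := min_le_left δ₀ δ₁; linarith), hz.2⟩
    have hfz : ‖f z‖ < R + ε₀ := by
      have := hcase ⟨z, hz0, rfl⟩; simpa using this
    rcases h₁ z hz (Or.inl (by have := min_le_right δ₀ δ₁; linarith)) with h | h
    · exact lt_of_lt_of_le h (by have := min_le_left ε ε₀; linarith)
    · exfalso; linarith
  · -- all near 1 on outer collar
    left
    intro ε hε
    set ε' : ℝ := min ε ε₀ with hε'
    have hε'pos : 0 < ε' := lt_min hε hε₀pos
    have hε'le : ε' ≤ ε₀ := min_le_right _ _
    obtain ⟨δ₁, hδ₁, h₁⟩ := hesc (R + ε') (1 - ε') (by linarith) (by linarith) (by linarith)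
    refine ⟨min δ₀ δ₁, lt_min hδ₀ hδ₁, fun z hz hcol => ?_⟩
    have hz0 : z ∈ C₀ := ⟨max_lt hz.1 (by
      have := min_le_left δ₀ δ₁; linarith), hz.2⟩
    have hfz : 1 - ε₀ < ‖f z‖ := by
      have := hcase ⟨z, hz0, rfl⟩; simpa using this
    rcases h₁ z hz (Or.inl (by have := min_le_right δ₀ δ₁; linarith)) with h | h
    · exfalso; linarith
    · have := min_le_left ε ε₀; linarith

lemma inner_dichotomy {r R : ℝ} (hr0 : 0 < r) (hr1 : r < 1) (hR0 : 0 < R) (hR1 : R < 1)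
    {f : ℂ → ℂ} (hcont : ContinuousOn f (ann1 r))
    (hesc : ∀ a b : ℝ, R < a → a ≤ b → b < 1 →
      ∃ δ > (0:ℝ), ∀ z ∈ ann1 r, (1 - δ < ‖z‖ ∨ ‖z‖ < r + δ) →
        (‖f z‖ < a ∨ b < ‖f z‖)) :
    (∀ ε > (0:ℝ), ∃ δ > (0:ℝ), ∀ z ∈ ann1 r, ‖z‖ < r + δ → 1 - ε < ‖f z‖) ∨
    (∀ ε > (0:ℝ), ∃ δ > (0:ℝ), ∀ z ∈ ann1 r, ‖z‖ < r + δ → ‖f z‖ < R + ε) := by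
  set ε₀ : ℝ := (1 - R)/3 with hε₀
  have hε₀pos : 0 < ε₀ := by rw [hε₀]; linarith
  have hgap : R + ε₀ < 1 - ε₀ := by rw [hε₀]; linarith
  obtain ⟨δ₀, hδ₀, h₀⟩ := hesc (R + ε₀) (1 - ε₀) (by linarith) (by linarith) (by linarith)
  set C₀ : Set ℂ := {z : ℂ | r < ‖z‖ ∧ ‖z‖ < min 1 (r + δ₀)} with hC₀
  have hC₀sub : C₀ ⊆ ann1 r := fun z hz =>
    ⟨hz.1, lt_of_lt_of_le hz.2 (min_le_left _ _)⟩
  have hC₀pre : IsPreconnected C₀ := annGen_isPreconnected hr0.le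
  have hC₀img : IsPreconnected ((fun z => ‖f z‖) '' C₀) :=
    hC₀pre.image _ ((continuous_norm.comp_continuousOn (hcont.mono hC₀sub)))
  have himg_sub : (fun z => ‖f z‖) '' C₀ ⊆ Iio (R + ε₀) ∪ Ioi (1 - ε₀) := by
    rintro x ⟨z, hz, rfl⟩
    rcases h₀ z (hC₀sub hz) (Or.inr (lt_of_lt_of_le hz.2 (min_le_right _ _))) with h | h
    · exact Or.inl h
    · exact Or.inr h
  have hdisj : Disjoint (Iio (R + ε₀)) (Ioi (1 - ε₀)) := by
    rw [Set.disjoint_left]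
    intro x hx hx'
    simp only [mem_Iio, mem_Ioi] at hx hx'
    linarith
  rcases hC₀img.subset_or_subset isOpen_Iio isOpen_Ioi hdisj himg_sub with hcase | hcase
  · right
    intro ε hε
    set ε' : ℝ := min ε ε₀ with hε'
    have hε'pos : 0 < ε' := lt_min hε hε₀pos
    have hε'le : ε' ≤ ε₀ := min_le_right _ _
    obtain ⟨δ₁, hδ₁, h₁⟩ := hesc (R + ε') (1 - ε') (by linarith) (by linarith) (by linarith)
    refine ⟨min δ₀ δ₁, lt_min hδ₀ hδ₁, fun z hz hcol => ?_⟩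
    have hz0 : z ∈ C₀ := ⟨hz.1, lt_min hz.2 (by
      have := min_le_left δ₀ δ₁; linarith)⟩
    have hfz : ‖f z‖ < R + ε₀ := by
      have := hcase ⟨z, hz0, rfl⟩; simpa using this
    rcases h₁ z hz (Or.inr (by have := min_le_right δ₀ δ₁; linarith)) with h | h
    · exact lt_of_lt_of_le h (by have := min_le_left ε ε₀; linarith)
    · exfalso; linarith
  · left
    intro ε hε
    set ε' : ℝ := min ε ε₀ with hε'
    have hε'pos : 0 < ε' := lt_min hε hε₀pos
    have hε'le : ε' ≤ ε₀ := min_le_right _ _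
    obtain ⟨δ₁, hδ₁, h₁⟩ := hesc (R + ε') (1 - ε') (by linarith) (by linarith) (by linarith)
    refine ⟨min δ₀ δ₁, lt_min hδ₀ hδ₁, fun z hz hcol => ?_⟩
    have hz0 : z ∈ C₀ := ⟨hz.1, lt_min hz.2 (by
      have := min_le_left δ₀ δ₁; linarith)⟩
    have hfz : 1 - ε₀ < ‖f z‖ := by
      have := hcase ⟨z, hz0, rfl⟩; simpa using this
    rcases h₁ z hz (Or.inr (by have := min_le_right δ₀ δ₁; linarith)) with h | h
    · exfalso; linarith
    · have := min_le_left ε ε₀; linarith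

lemma mem_ann1_mid {r : ℝ} (hr0 : 0 < r) (hr1 : r < 1) :
    (((r+1)/2 : ℝ) : ℂ) ∈ ann1 r := by
  constructor <;>
  · rw [Complex.norm_real, Real.norm_eq_abs, abs_of_pos (by linarith)]
    linarith

lemma not_both_one {r R : ℝ} (hr0 : 0 < r) (hr1 : r < 1) (hR0 : 0 < R) (hR1 : R < 1)
    {f : ℂ → ℂ} (hdiff : DifferentiableOn ℂ f (ann1 r))
    (hmaps : Set.MapsTo f (ann1 r) (ann1 R))
    (hout : ∀ ε > (0:ℝ), ∃ δ > (0:ℝ), ∀ z ∈ ann1 r, 1 - δ < ‖z‖ → 1 - ε < ‖f z‖)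
    (hin : ∀ ε > (0:ℝ), ∃ δ > (0:ℝ), ∀ z ∈ ann1 r, ‖z‖ < r + δ → 1 - ε < ‖f z‖) :
    False := by
  have hne : ∀ z ∈ ann1 r, f z ≠ 0 := by
    intro z hz h0
    have := (hmaps hz).1
    rw [h0] at this; simp at this; linarith
  have hginv : DifferentiableOn ℂ (fun z => (f z)⁻¹) (ann1 r) := hdiff.inv hne
  have hbound : ∀ z ∈ ann1 r, ‖(f z)⁻¹‖ ≤ 1 := by
    apply annulus_maxmod hr0 hr1 hginv
    intro ε hε
    set ε₁ : ℝ := ε / (1 + ε) with hε₁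
    have hε₁pos : 0 < ε₁ := by positivity
    have hε₁lt : ε₁ < 1 := by
      rw [hε₁, div_lt_one (by linarith)]; linarith
    obtain ⟨δo, hδo, ho⟩ := hout ε₁ hε₁pos
    obtain ⟨δi, hδi, hi⟩ := hin ε₁ hε₁pos
    refine ⟨min δo δi, lt_min hδo hδi, fun z hz hcol => ?_⟩
    have hfz : 1 - ε₁ < ‖f z‖ := by
      rcases hcol with h | h
      · exact ho z hz (by have := min_le_left δo δi; linarith)
      · exact hi z hz (by have := min_le_right δo δi; linarith)
    have h1 : (0:ℝ) < 1 - ε₁ := by linarith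
    rw [norm_inv]
    have : ‖f z‖⁻¹ < (1 - ε₁)⁻¹ := by
      apply inv_strictAnti₀ h1 hfz
    have heq : (1 - ε₁)⁻¹ = 1 + ε := by
      rw [hε₁]
      field_simp
      ring
    linarith [this, heq ▸ this]
  have hz0 := mem_ann1_mid hr0 hr1
  have h1 := hbound _ hz0
  rw [norm_inv] at h1
  have h2 := (hmaps hz0).2
  have h3 : 0 < ‖f (((r+1)/2 : ℝ) : ℂ)‖ := norm_pos_iff.mpr (hne _ hz0)
  have h4 : 1 ≤ ‖f (((r+1)/2 : ℝ) : ℂ)‖ := by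
    have := (inv_le_comm₀ h3 one_pos).mp (by simpa using h1)
    simpa using this
  linarith

lemma not_both_R {r R : ℝ} (hr0 : 0 < r) (hr1 : r < 1) (hR0 : 0 < R) (hR1 : R < 1)
    {f : ℂ → ℂ} (hdiff : DifferentiableOn ℂ f (ann1 r))
    (hmaps : Set.MapsTo f (ann1 r) (ann1 R))
    (hout : ∀ ε > (0:ℝ), ∃ δ > (0:ℝ), ∀ z ∈ ann1 r, 1 - δ < ‖z‖ → ‖f z‖ < R + ε)
    (hin : ∀ ε > (0:ℝ), ∃ δ > (0:ℝ), ∀ z ∈ ann1 r, ‖z‖ < r + δ → ‖f z‖ < R + ε) :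
    False := by
  have hbound : ∀ z ∈ ann1 r, ‖f z‖ ≤ R := by
    apply annulus_maxmod hr0 hr1 hdiff
    intro ε hε
    obtain ⟨δo, hδo, ho⟩ := hout ε hε
    obtain ⟨δi, hδi, hi⟩ := hin ε hε
    refine ⟨min δo δi, lt_min hδo hδi, fun z hz hcol => ?_⟩
    rcases hcol with h | h
    · exact (ho z hz (by have := min_le_left δo δi; linarith)).le
    · exact (hi z hz (by have := min_le_right δo δi; linarith)).le
  have hz0 := mem_ann1_mid hr0 hr1
  have := hbound _ hz0
  have := (hmaps hz0).1
  linarith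

section A
variable {r R : ℝ} (hr0 : 0 < r) (hr1 : r < 1) (hR0 : 0 < R) (hR1 : R < 1)
  {f : ℂ → ℂ} (hdiff : DifferentiableOn ℂ f (ann1 r))
  (hmaps : Set.MapsTo f (ann1 r) (ann1 R))

omit hr0 hr1 hR0 hR1 hdiff hmaps in
lemma zne (hr0' : 0 < r) {z : ℂ} (hz : z ∈ ann1 r) : z ≠ 0 := by
  intro h
  rw [h] at hz
  have : r < ‖(0:ℂ)‖ := hz.1
  rw [norm_zero] at this
  linarith

include hr0 hr1 hR0 hR1 hdiff hmaps in
lemma pow_upper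
    (hin : ∀ ε > (0:ℝ), ∃ δ > (0:ℝ), ∀ z ∈ ann1 r, ‖z‖ < r + δ → ‖f z‖ < R + ε)
    (m n : ℕ) (hm : 1 ≤ m) (hn : (n:ℝ) * Real.log r ≥ (m:ℝ) * Real.log R) :
    ∀ z ∈ ann1 r, ‖f z‖ ^ m ≤ ‖z‖ ^ n := by
  have hRm : R ^ m ≤ r ^ n := by
    rw [← Real.exp_log (pow_pos hR0 m), ← Real.exp_log (pow_pos hr0 n),
      Real.log_pow, Real.log_pow]
    exact Real.exp_le_exp.mpr (by exact_mod_cast hn)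
  have hgdiff : DifferentiableOn ℂ (fun z => (f z) ^ m / z ^ n) (ann1 r) := by
    apply DifferentiableOn.div (hdiff.pow m) ((differentiableOn_id).pow n)
    intro z hz
    exact pow_ne_zero n (zne hr0 hz)
  have key : ∀ z ∈ ann1 r, ‖(f z) ^ m / z ^ n‖ ≤ 1 := by
    apply annulus_maxmod hr0 hr1 hgdiff
    intro ε hε
    -- outer bound: find η₁ s.t. x close to 1 ⇒ x ^ n > 1/(1+ε)
    have h1 : ∀ᶠ x : ℝ in nhds 1, (1:ℝ)/(1+ε) < x ^ n := by
      have hc : ContinuousAt (fun x : ℝ => x ^ n) 1 := (continuous_pow n).continuousAt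
      have hlt : (1:ℝ)/(1+ε) < 1 ^ n := by
        rw [one_pow, div_lt_one (by linarith)]; linarith
      exact hc.eventually_const_lt hlt
    obtain ⟨η₁, hη₁, hb₁⟩ := Metric.eventually_nhds_iff.mp h1
    -- inner bound: find η₂ s.t. x close to R ⇒ x ^ m < R^m * (1+ε)
    have h2 : ∀ᶠ x : ℝ in nhds R, x ^ m < R ^ m * (1+ε) := by
      have hc : ContinuousAt (fun x : ℝ => x ^ m) R := (continuous_pow m).continuousAt
      have hlt : R ^ m < R ^ m * (1+ε) := by
        nlinarith [pow_pos hR0 m]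
      exact hc.eventually_lt_const hlt
    obtain ⟨η₂, hη₂, hb₂⟩ := Metric.eventually_nhds_iff.mp h2
    obtain ⟨δi, hδi, hi⟩ := hin (η₂/2) (by linarith)
    refine ⟨min (η₁/2) δi, lt_min (by linarith) hδi, fun z hz hcol => ?_⟩
    have hz0 : (0:ℝ) < ‖z‖ := lt_trans hr0 hz.1
    have hfz0 : (0:ℝ) ≤ ‖f z‖ := norm_nonneg _
    have hfz1 : ‖f z‖ < 1 := (hmaps hz).2
    have hnorm : ‖(f z) ^ m / z ^ n‖ = ‖f z‖ ^ m / ‖z‖ ^ n := by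
      rw [norm_div, norm_pow, norm_pow]
    rcases hcol with h | h
    · -- outer
      have hx : dist ‖z‖ 1 < η₁ := by
        rw [Real.dist_eq, abs_of_nonpos (by linarith [hz.2])]
        have := min_le_left (η₁/2) δi
        linarith [hz.2]
      have hxn := hb₁ hx
      rw [hnorm]
      have hfm : ‖f z‖ ^ m ≤ 1 := pow_le_one₀ hfz0 hfz1.le
      have hzn : (0:ℝ) < ‖z‖ ^ n := pow_pos hz0 n
      rw [div_le_iff₀ hzn]
      have : (1:ℝ) ≤ (1+ε) * ‖z‖ ^ n := by
        rw [div_lt_iff₀ (by linarith : (0:ℝ) < 1+ε)] at hxn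
        linarith
      nlinarith
    · -- inner
      have hfz : ‖f z‖ < R + η₂/2 := hi z hz (by
        have := min_le_right (η₁/2) δi; linarith)
      have hfzR : R < ‖f z‖ := (hmaps hz).1
      have hx : dist ‖f z‖ R < η₂ := by
        rw [Real.dist_eq, abs_of_pos (by linarith)]
        linarith
      have hxm := hb₂ hx
      rw [hnorm]
      have hzr : r ^ n ≤ ‖z‖ ^ n := pow_le_pow_left₀ hr0.le hz.1.le n
      have hzn : (0:ℝ) < ‖z‖ ^ n := pow_pos hz0 n
      rw [div_le_iff₀ hzn]
      have hrn : (0:ℝ) < r ^ n := pow_pos hr0 n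
      refine le_of_lt ?_
      calc ‖f z‖ ^ m < R ^ m * (1+ε) := hxm
        _ ≤ r ^ n * (1+ε) := by nlinarith
        _ ≤ (1 + ε) * ‖z‖ ^ n := by nlinarith
  intro z hz
  have := key z hz
  rw [norm_div, norm_pow, norm_pow, div_le_one (pow_pos (lt_trans hr0 hz.1) n)] at this
  exact this

include hr0 hr1 hR0 hR1 hdiff hmaps in
lemma pow_lower
    (hout : ∀ ε > (0:ℝ), ∃ δ > (0:ℝ), ∀ z ∈ ann1 r, 1 - δ < ‖z‖ → 1 - ε < ‖f z‖)
    (m n : ℕ) (hm : 1 ≤ m) (hn : (n:ℝ) * Real.log r ≤ (m:ℝ) * Real.log R) :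
    ∀ z ∈ ann1 r, ‖z‖ ^ n ≤ ‖f z‖ ^ m := by
  have hRm : r ^ n ≤ R ^ m := by
    rw [← Real.exp_log (pow_pos hR0 m), ← Real.exp_log (pow_pos hr0 n),
      Real.log_pow, Real.log_pow]
    exact Real.exp_le_exp.mpr (by exact_mod_cast hn)
  have hfne : ∀ z ∈ ann1 r, f z ≠ 0 := by
    intro z hz h0
    have := (hmaps hz).1
    rw [h0, norm_zero] at this; linarith
  have hgdiff : DifferentiableOn ℂ (fun z => z ^ n / (f z) ^ m) (ann1 r) := by
    apply DifferentiableOn.div ((differentiableOn_id).pow n) (hdiff.pow m)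
    intro z hz
    exact pow_ne_zero m (hfne z hz)
  have key : ∀ z ∈ ann1 r, ‖z ^ n / (f z) ^ m‖ ≤ 1 := by
    apply annulus_maxmod hr0 hr1 hgdiff
    intro ε hε
    have h1 : ∀ᶠ x : ℝ in nhds 1, (1:ℝ)/(1+ε) < x ^ m := by
      have hc : ContinuousAt (fun x : ℝ => x ^ m) 1 := (continuous_pow m).continuousAt
      have hlt : (1:ℝ)/(1+ε) < 1 ^ m := by
        rw [one_pow, div_lt_one (by linarith)]; linarith
      exact hc.eventually_const_lt hlt
    obtain ⟨η₁, hη₁, hb₁⟩ := Metric.eventually_nhds_iff.mp h1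
    have h2 : ∀ᶠ x : ℝ in nhds r, x ^ n < r ^ n * (1+ε) := by
      have hc : ContinuousAt (fun x : ℝ => x ^ n) r := (continuous_pow n).continuousAt
      have hlt : r ^ n < r ^ n * (1+ε) := by
        nlinarith [pow_pos hr0 n]
      exact hc.eventually_lt_const hlt
    obtain ⟨η₂, hη₂, hb₂⟩ := Metric.eventually_nhds_iff.mp h2
    obtain ⟨δo, hδo, ho⟩ := hout (η₁/2) (by linarith)
    refine ⟨min δo (η₂/2), lt_min hδo (by linarith), fun z hz hcol => ?_⟩
    have hz0 : (0:ℝ) < ‖z‖ := lt_trans hr0 hz.1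
    have hfzR : R < ‖f z‖ := (hmaps hz).1
    have hfz0 : (0:ℝ) < ‖f z‖ := lt_trans hR0 hfzR
    have hnorm : ‖z ^ n / (f z) ^ m‖ = ‖z‖ ^ n / ‖f z‖ ^ m := by
      rw [norm_div, norm_pow, norm_pow]
    rcases hcol with h | h
    · -- outer : ‖f z‖ close to 1
      have hfz : 1 - η₁/2 < ‖f z‖ := ho z hz (by
        have := min_le_left δo (η₂/2); linarith)
      have hfz1 : ‖f z‖ < 1 := (hmaps hz).2
      have hx : dist ‖f z‖ 1 < η₁ := by
        rw [Real.dist_eq, abs_of_nonpos (by linarith)]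
        linarith
      have hxm := hb₁ hx
      rw [hnorm]
      have hzn : ‖z‖ ^ n ≤ 1 := pow_le_one₀ hz0.le hz.2.le
      have hfm : (0:ℝ) < ‖f z‖ ^ m := pow_pos hfz0 m
      rw [div_le_iff₀ hfm]
      rw [div_lt_iff₀ (by linarith : (0:ℝ) < 1+ε)] at hxm
      nlinarith
    · -- inner : ‖z‖ close to r
      have hzr : ‖z‖ < r + η₂/2 := by
        have := min_le_right δo (η₂/2); linarith
      have hx : dist ‖z‖ r < η₂ := by
        rw [Real.dist_eq, abs_of_pos (by linarith [hz.1])]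
        linarith [hz.1]
      have hxn := hb₂ hx
      rw [hnorm]
      have hRf : R ^ m ≤ ‖f z‖ ^ m := pow_le_pow_left₀ hR0.le hfzR.le m
      have hfm : (0:ℝ) < ‖f z‖ ^ m := pow_pos hfz0 m
      rw [div_le_iff₀ hfm]
      have hRm0 : (0:ℝ) < R ^ m := pow_pos hR0 m
      refine le_of_lt ?_
      calc ‖z‖ ^ n < r ^ n * (1+ε) := hxn
        _ ≤ R ^ m * (1+ε) := by nlinarith
        _ ≤ (1 + ε) * ‖f z‖ ^ m := by nlinarith
  intro z hz
  have := key z hz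
  have hfz0 : (0:ℝ) < ‖f z‖ := lt_trans hR0 (hmaps hz).1
  rw [norm_div, norm_pow, norm_pow, div_le_one (pow_pos hfz0 m)] at this
  exact this

include hr0 hr1 hR0 hR1 hdiff hmaps in
lemma log_abs_eq
    (hout : ∀ ε > (0:ℝ), ∃ δ > (0:ℝ), ∀ z ∈ ann1 r, 1 - δ < ‖z‖ → 1 - ε < ‖f z‖)
    (hin : ∀ ε > (0:ℝ), ∃ δ > (0:ℝ), ∀ z ∈ ann1 r, ‖z‖ < r + δ → ‖f z‖ < R + ε) :
    ∀ z ∈ ann1 r, Real.log ‖f z‖ =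
      (Real.log R / Real.log r) * Real.log ‖z‖ := by
  set α : ℝ := Real.log R / Real.log r with hα
  have hlr : Real.log r < 0 := Real.log_neg hr0 hr1
  have hlR : Real.log R < 0 := Real.log_neg hR0 hR1
  have hαpos : 0 < α := div_pos_iff.mpr (Or.inr ⟨hlR, hlr⟩)
  have hαr : α * Real.log r = Real.log R := by
    rw [hα, div_mul_cancel₀ _ (ne_of_lt hlr)]
  intro z hz
  have hz0 : (0:ℝ) < ‖z‖ := lt_trans hr0 hz.1
  have hfz0 : (0:ℝ) < ‖f z‖ := lt_trans hR0 (hmaps hz).1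
  have hlz : Real.log ‖z‖ < 0 := Real.log_neg hz0 hz.2
  -- upper bound via floor
  have hub : ∀ m : ℕ, 1 ≤ m → (m:ℝ) * Real.log ‖f z‖ ≤ (⌊(m:ℝ) * α⌋₊ : ℝ) * Real.log ‖z‖ := by
    intro m hm
    set n : ℕ := ⌊(m:ℝ) * α⌋₊ with hn
    have hnle : (n:ℝ) ≤ (m:ℝ) * α := Nat.floor_le (by positivity)
    have hcond : (n:ℝ) * Real.log r ≥ (m:ℝ) * Real.log R := by
      rw [← hαr]
      nlinarith
    have := pow_upper hr0 hr1 hR0 hR1 hdiff hmaps hin m n hm hcond z hz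
    have hlog := Real.log_le_log (pow_pos hfz0 m) this
    rwa [Real.log_pow, Real.log_pow] at hlog
  have hlb : ∀ m : ℕ, 1 ≤ m → (⌈(m:ℝ) * α⌉₊ : ℝ) * Real.log ‖z‖ ≤ (m:ℝ) * Real.log ‖f z‖ := by
    intro m hm
    set n : ℕ := ⌈(m:ℝ) * α⌉₊ with hn
    have hnge : (m:ℝ) * α ≤ (n:ℝ) := Nat.le_ceil _
    have hcond : (n:ℝ) * Real.log r ≤ (m:ℝ) * Real.log R := by
      rw [← hαr]
      nlinarith
    have := pow_lower hr0 hr1 hR0 hR1 hdiff hmaps hout m n hm hcond z hz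
    have hlog := Real.log_le_log (pow_pos hz0 n) this
    rwa [Real.log_pow, Real.log_pow] at hlog
  -- take limits
  have hle1 : Real.log ‖f z‖ ≤ α * Real.log ‖z‖ := by
    have hseq : Filter.Tendsto (fun m : ℕ => ((⌊((m:ℝ)+1) * α⌋₊ : ℝ)/((m:ℝ)+1)) * Real.log ‖z‖)
        Filter.atTop (nhds (α * Real.log ‖z‖)) := by
      apply Filter.Tendsto.mul_const
      have hsq : Filter.Tendsto (fun m : ℕ => (⌊((m:ℝ)+1) * α⌋₊ : ℝ)/((m:ℝ)+1))
          Filter.atTop (nhds α) := by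
        have h1 : ∀ m : ℕ, α - 1/((m:ℝ)+1) ≤ (⌊((m:ℝ)+1) * α⌋₊ : ℝ)/((m:ℝ)+1) := by
          intro m
          have hm1 : (0:ℝ) < (m:ℝ)+1 := by positivity
          rw [le_div_iff₀ hm1]
          have := Nat.sub_one_lt_floor (((m:ℝ)+1) * α)
          have hexp : (α - 1/((m:ℝ)+1)) * ((m:ℝ)+1) = ((m:ℝ)+1)*α - 1 := by
            field_simp
          linarith
        have h2 : ∀ m : ℕ, (⌊((m:ℝ)+1) * α⌋₊ : ℝ)/((m:ℝ)+1) ≤ α := by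
          intro m
          have hm1 : (0:ℝ) < (m:ℝ)+1 := by positivity
          rw [div_le_iff₀ hm1]
          have := Nat.floor_le (by positivity : (0:ℝ) ≤ ((m:ℝ)+1) * α)
          linarith
        have hlow : Filter.Tendsto (fun m : ℕ => α - 1/((m:ℝ)+1)) Filter.atTop (nhds α) := by
          have := tendsto_one_div_add_atTop_nhds_zero_nat (𝕜 := ℝ)
          have h := (tendsto_const_nhds (x := α) (f := Filter.atTop (α := ℕ))).sub this
          simpa using h
        exact tendsto_of_tendsto_of_tendsto_of_le_of_le hlow tendsto_const_nhds h1 h2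
      exact hsq
    apply ge_of_tendsto hseq
    filter_upwards with m
    have := hub (m+1) (Nat.le_add_left 1 m)
    have hm1 : (0:ℝ) < (m:ℝ)+1 := by positivity
    rw [div_mul_eq_mul_div, le_div_iff₀ hm1]
    push_cast at this ⊢
    linarith
  have hle2 : α * Real.log ‖z‖ ≤ Real.log ‖f z‖ := by
    have hseq : Filter.Tendsto (fun m : ℕ => ((⌈((m:ℝ)+1) * α⌉₊ : ℝ)/((m:ℝ)+1)) * Real.log ‖z‖)
        Filter.atTop (nhds (α * Real.log ‖z‖)) := by
      apply Filter.Tendsto.mul_const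
      have h1 : ∀ m : ℕ, α ≤ (⌈((m:ℝ)+1) * α⌉₊ : ℝ)/((m:ℝ)+1) := by
        intro m
        have hm1 : (0:ℝ) < (m:ℝ)+1 := by positivity
        rw [le_div_iff₀ hm1]
        have := Nat.le_ceil (((m:ℝ)+1) * α)
        linarith
      have h2 : ∀ m : ℕ, (⌈((m:ℝ)+1) * α⌉₊ : ℝ)/((m:ℝ)+1) ≤ α + 1/((m:ℝ)+1) := by
        intro m
        have hm1 : (0:ℝ) < (m:ℝ)+1 := by positivity
        rw [div_le_iff₀ hm1]
        have := Nat.ceil_lt_add_one (by positivity : (0:ℝ) ≤ ((m:ℝ)+1) * α)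
        have hexp : (α + 1/((m:ℝ)+1)) * ((m:ℝ)+1) = ((m:ℝ)+1)*α + 1 := by
          field_simp
        linarith
      have hhigh : Filter.Tendsto (fun m : ℕ => α + 1/((m:ℝ)+1)) Filter.atTop (nhds α) := by
        have := tendsto_one_div_add_atTop_nhds_zero_nat (𝕜 := ℝ)
        have h := (tendsto_const_nhds (x := α) (f := Filter.atTop (α := ℕ))).add this
        simpa using h
      exact tendsto_of_tendsto_of_tendsto_of_le_of_le tendsto_const_nhds hhigh h1 h2
    apply le_of_tendsto hseq
    filter_upwards with m
    have := hlb (m+1) (Nat.le_add_left 1 m)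
    have hm1 : (0:ℝ) < (m:ℝ)+1 := by positivity
    rw [div_mul_eq_mul_div, div_le_iff₀ hm1]
    push_cast at this ⊢
    linarith
  linarith
end A

lemma hasDerivAt_log_norm {ψ : ℝ → ℂ} {d : ℂ} {t₀ : ℝ}
    (h : HasDerivAt ψ d t₀) (hne : ψ t₀ ≠ 0) :
    HasDerivAt (fun t => Real.log ‖ψ t‖) ((d / ψ t₀).re) t₀ := by
  have hre : HasDerivAt (fun t => (ψ t).re) d.re t₀ :=
    (Complex.reCLM.hasFDerivAt.comp_hasDerivAt t₀ h)
  have him : HasDerivAt (fun t => (ψ t).im) d.im t₀ :=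
    (Complex.imCLM.hasFDerivAt.comp_hasDerivAt t₀ h)
  have hq : HasDerivAt (fun t => (ψ t).re * (ψ t).re + (ψ t).im * (ψ t).im)
      (2 * ((ψ t₀).re * d.re + (ψ t₀).im * d.im)) t₀ := by
    have h1 := hre.mul hre
    have h2 := him.mul him
    have := h1.add h2
    refine this.congr_deriv ?_
    ring
  have hq0 : (ψ t₀).re * (ψ t₀).re + (ψ t₀).im * (ψ t₀).im ≠ 0 := by
    have : Complex.normSq (ψ t₀) ≠ 0 := by simpa using Complex.normSq_pos.mpr hne |>.ne'
    rwa [Complex.normSq_apply] at this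
  have hlog : HasDerivAt (fun t => Real.log ((ψ t).re * (ψ t).re + (ψ t).im * (ψ t).im))
      ((2 * ((ψ t₀).re * d.re + (ψ t₀).im * d.im)) / ((ψ t₀).re * (ψ t₀).re + (ψ t₀).im * (ψ t₀).im)) t₀ := by
    have := (Real.hasDerivAt_log hq0).comp t₀ hq
    refine this.congr_deriv ?_
    ring
  have heq : (fun t => Real.log ‖ψ t‖) =
      fun t => Real.log ((ψ t).re * (ψ t).re + (ψ t).im * (ψ t).im) / 2 := by
    funext t
    rw [← Complex.normSq_apply, Complex.norm_def, Real.log_sqrt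
      (Complex.normSq_nonneg _)]
  rw [heq]
  have := hlog.div_const 2
  refine this.congr_deriv ?_
  rw [Complex.div_re, Complex.normSq_apply]
  field_simp

lemma deriv_ratio {r R : ℝ} (hr0 : 0 < r) (hr1 : r < 1) (hR0 : 0 < R)
    {f : ℂ → ℂ} (hdiff : DifferentiableOn ℂ f (ann1 r))
    (hmaps : Set.MapsTo f (ann1 r) (ann1 R)) {α : ℝ}
    (habs : ∀ z ∈ ann1 r, Real.log ‖f z‖ = α * Real.log ‖z‖) :
    ∀ z₀ ∈ ann1 r, deriv f z₀ * z₀ = (α : ℂ) * f z₀ := by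
  have hopen : IsOpen (ann1 r) :=
    (isOpen_lt continuous_const continuous_norm).inter
      (isOpen_lt continuous_norm continuous_const)
  intro z₀ hz₀
  have hz₀ne : z₀ ≠ 0 := by
    intro h; rw [h] at hz₀; have := hz₀.1; rw [norm_zero] at this; linarith
  have hfz₀ne : f z₀ ≠ 0 := by
    intro h
    have := (hmaps hz₀).1
    rw [h, norm_zero] at this; linarith
  have hfa : DifferentiableAt ℂ f z₀ :=
    (hdiff z₀ hz₀).differentiableAt (hopen.mem_nhds hz₀)
  set w : ℂ := z₀ * deriv f z₀ / f z₀ with hw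
  -- First curve: radial
  have hc1 : HasDerivAt (fun t : ℝ => z₀ * Complex.exp ((t : ℂ))) z₀ 0 := by
    have hin : HasDerivAt (fun t : ℝ => ((t : ℂ))) 1 0 := by
      simpa using (hasDerivAt_id (0:ℝ)).ofReal_comp
    have hexp : HasDerivAt (fun t : ℝ => Complex.exp ((t:ℂ))) 1 0 := by
      have := (Complex.hasDerivAt_exp ((0:ℝ):ℂ)).scomp (0:ℝ) hin
      simpa [Function.comp_def] using this
    have := hexp.const_mul z₀
    simpa using this
  have hψ1 : HasDerivAt (fun t : ℝ => f (z₀ * Complex.exp ((t : ℂ)))) (z₀ * deriv f z₀) 0 := by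
    have := (hfa.hasDerivAt.scomp_of_eq (0:ℝ) hc1 (by simp))
    simpa [smul_eq_mul, mul_comm, Function.comp_def] using this
  have hφ1 : HasDerivAt (fun t : ℝ => Real.log ‖f (z₀ * Complex.exp ((t : ℂ)))‖) w.re 0 := by
    have := hasDerivAt_log_norm hψ1 (by simpa using hfz₀ne)
    simpa using this
  -- eventual equality with affine function
  have hev1 : (fun t : ℝ => Real.log ‖f (z₀ * Complex.exp ((t : ℂ)))‖) =ᶠ[nhds 0]
      (fun t : ℝ => α * (Real.log ‖z₀‖ + t)) := by
    have hcont : ContinuousAt (fun t : ℝ => z₀ * Complex.exp ((t : ℂ))) 0 := hc1.continuousAt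
    have hmem : ∀ᶠ t : ℝ in nhds 0, z₀ * Complex.exp ((t : ℂ)) ∈ ann1 r := by
      apply hcont.eventually_mem
      apply hopen.mem_nhds
      simpa using hz₀
    filter_upwards [hmem] with t ht
    rw [habs _ ht]
    congr 1
    rw [norm_mul, Complex.norm_exp]
    simp only [Complex.ofReal_re]
    rw [Real.log_mul (norm_ne_zero_iff.mpr hz₀ne) (Real.exp_ne_zero t), Real.log_exp]
  have hre : w.re = α := by
    have haff : HasDerivAt (fun t : ℝ => α * (Real.log ‖z₀‖ + t)) α 0 := by
      have := ((hasDerivAt_id (0:ℝ)).const_add (Real.log ‖z₀‖)).const_mul α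
      simpa using this
    have := haff.congr_of_eventuallyEq hev1
    exact (this.unique hφ1).symm
  -- Second curve: angular
  have hc2 : HasDerivAt (fun t : ℝ => z₀ * Complex.exp ((t : ℂ) * Complex.I)) (z₀ * Complex.I) 0 := by
    have hin : HasDerivAt (fun t : ℝ => ((t : ℂ) * Complex.I)) Complex.I 0 := by
      have h0 : HasDerivAt (fun t : ℝ => ((t : ℂ))) 1 0 := by
        simpa using (hasDerivAt_id (0:ℝ)).ofReal_comp
      simpa using h0.mul_const Complex.I
    have hexp : HasDerivAt (fun t : ℝ => Complex.exp ((t:ℂ) * Complex.I)) Complex.I 0 := by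
      have := (Complex.hasDerivAt_exp (((0:ℝ):ℂ) * Complex.I)).scomp (0:ℝ) hin
      simpa [Function.comp_def] using this
    have := hexp.const_mul z₀
    simpa using this
  have hψ2 : HasDerivAt (fun t : ℝ => f (z₀ * Complex.exp ((t : ℂ) * Complex.I)))
      (z₀ * Complex.I * deriv f z₀) 0 := by
    have := (hfa.hasDerivAt.scomp_of_eq (0:ℝ) hc2 (by simp))
    simpa [smul_eq_mul, mul_comm, mul_assoc, mul_left_comm, Function.comp_def] using this
  have hφ2 : HasDerivAt (fun t : ℝ => Real.log ‖f (z₀ * Complex.exp ((t : ℂ) * Complex.I))‖)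
      ((z₀ * Complex.I * deriv f z₀ / f z₀).re) 0 := by
    have := hasDerivAt_log_norm hψ2 (by simpa using hfz₀ne)
    simpa using this
  have hev2 : (fun t : ℝ => Real.log ‖f (z₀ * Complex.exp ((t : ℂ) * Complex.I))‖) =ᶠ[nhds 0]
      (fun _ : ℝ => α * Real.log ‖z₀‖) := by
    have hcont : ContinuousAt (fun t : ℝ => z₀ * Complex.exp ((t : ℂ) * Complex.I)) 0 :=
      hc2.continuousAt
    have hmem : ∀ᶠ t : ℝ in nhds 0, z₀ * Complex.exp ((t : ℂ) * Complex.I) ∈ ann1 r := by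
      apply hcont.eventually_mem
      apply hopen.mem_nhds
      simpa using hz₀
    filter_upwards [hmem] with t ht
    rw [habs _ ht]
    congr 2
    rw [norm_mul, Complex.norm_exp]
    simp
  have him : (z₀ * Complex.I * deriv f z₀ / f z₀).re = 0 := by
    have hconst : HasDerivAt (fun _ : ℝ => α * Real.log ‖z₀‖) 0 0 := hasDerivAt_const _ _
    have := hconst.congr_of_eventuallyEq hev2
    exact (this.unique hφ2).symm
  -- combine
  have himw : w.im = 0 := by
    have h1 : z₀ * Complex.I * deriv f z₀ / f z₀ = Complex.I * w := by
      rw [hw]; ring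
    rw [h1] at him
    simpa using him
  have hwα : w = (α : ℂ) := by
    apply Complex.ext
    · simpa using hre
    · simpa using himw
  have := hwα
  rw [hw, div_eq_iff hfz₀ne] at this
  rw [← this]; ring

lemma alpha_integer {r R : ℝ} (hr0 : 0 < r) (hr1 : r < 1) (hR0 : 0 < R)
    {f : ℂ → ℂ} (hdiff : DifferentiableOn ℂ f (ann1 r))
    (hmaps : Set.MapsTo f (ann1 r) (ann1 R)) {α : ℝ} (hα : 0 < α)
    (hderiv : ∀ z ∈ ann1 r, deriv f z * z = (α : ℂ) * f z) :
    ∃ d : ℕ, 1 ≤ d ∧ α = (d : ℝ) := by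
  have hopen : IsOpen (ann1 r) :=
    (isOpen_lt continuous_const continuous_norm).inter
      (isOpen_lt continuous_norm continuous_const)
  set s : ℝ := (r+1)/2 with hs
  have hs0 : 0 < s := by rw [hs]; linarith
  set c : ℝ → ℂ := fun t => (s:ℂ) * Complex.exp ((t:ℂ) * Complex.I) with hc
  have hcmem : ∀ t : ℝ, c t ∈ ann1 r := by
    intro t
    have : ‖c t‖ = s := by
      rw [hc]
      simp only [norm_mul, Complex.norm_exp]
      simp [abs_of_pos hs0]
    rw [ann1, mem_setOf_eq, this]
    constructor <;> (rw [hs]; linarith)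
  have hfne : ∀ t : ℝ, f (c t) ≠ 0 := by
    intro t h0
    have := (hmaps (hcmem t)).1
    rw [h0, norm_zero] at this; linarith
  have hcder : ∀ t : ℝ, HasDerivAt c (c t * Complex.I) t := by
    intro t
    have hin : HasDerivAt (fun t : ℝ => ((t : ℂ) * Complex.I)) Complex.I t := by
      have h0 : HasDerivAt (fun t : ℝ => ((t : ℂ))) 1 t := by
        simpa using (hasDerivAt_id t).ofReal_comp
      simpa using h0.mul_const Complex.I
    have hexp : HasDerivAt (fun t : ℝ => Complex.exp ((t:ℂ) * Complex.I))
        (Complex.I * Complex.exp ((t:ℂ) * Complex.I)) t := by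
      have := (Complex.hasDerivAt_exp (((t:ℝ):ℂ) * Complex.I)).scomp t hin
      simpa [smul_eq_mul, mul_comm, Function.comp_def] using this
    have := hexp.const_mul (s:ℂ)
    rw [hc]
    refine this.congr_deriv ?_
    ring
  have huder : ∀ t : ℝ, HasDerivAt (fun t => f (c t)) (Complex.I * (α:ℂ) * f (c t)) t := by
    intro t
    have hfa : DifferentiableAt ℂ f (c t) :=
      (hdiff (c t) (hcmem t)).differentiableAt (hopen.mem_nhds (hcmem t))
    have := (hfa.hasDerivAt.scomp_of_eq t (hcder t) rfl)
    have heq : c t * Complex.I • deriv f (c t) = Complex.I * (α:ℂ) * f (c t) := by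
      rw [smul_eq_mul]
      have h1 := hderiv (c t) (hcmem t)
      calc c t * (Complex.I * deriv f (c t)) = (deriv f (c t) * c t) * Complex.I := by ring
        _ = ((α:ℂ) * f (c t)) * Complex.I := by rw [h1]
        _ = Complex.I * (α:ℂ) * f (c t) := by ring
    rw [← heq]
    simpa [smul_eq_mul, mul_comm, mul_assoc, mul_left_comm, Function.comp_def] using this
  set v : ℝ → ℂ := fun t => f (c t) * Complex.exp (-(Complex.I * (α:ℂ) * (t:ℂ))) with hv
  have hvder : ∀ t : ℝ, HasDerivAt v 0 t := by
    intro t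
    have hin : HasDerivAt (fun t : ℝ => -(Complex.I * (α:ℂ) * (t:ℂ)))
        (-(Complex.I * (α:ℂ))) t := by
      have h0 : HasDerivAt (fun t : ℝ => ((t : ℂ))) 1 t := by
        simpa using (hasDerivAt_id t).ofReal_comp
      have := (h0.const_mul (Complex.I * (α:ℂ))).neg
      simpa [mul_comm, Pi.neg_def] using this
    have hexp : HasDerivAt (fun t : ℝ => Complex.exp (-(Complex.I * (α:ℂ) * (t:ℂ))))
        (-(Complex.I * (α:ℂ)) * Complex.exp (-(Complex.I * (α:ℂ) * (t:ℂ)))) t := by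
      have := (Complex.hasDerivAt_exp (-(Complex.I * (α:ℂ) * ((t:ℝ):ℂ)))).scomp t hin
      simpa [smul_eq_mul, mul_comm, Function.comp_def] using this
    have := (huder t).mul hexp
    rw [hv]
    refine this.congr_deriv ?_
    ring
  have hconst : v (2 * Real.pi) = v 0 :=
    is_const_of_deriv_eq_zero (fun t => (hvder t).differentiableAt)
      (fun t => (hvder t).deriv) _ _
  have hc2π : c (2 * Real.pi) = c 0 := by
    rw [hc]
    simp only []
    congr 1
    rw [show ((2 * Real.pi : ℝ) : ℂ) * Complex.I = 2 * (Real.pi : ℂ) * Complex.I by push_cast; ring,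
      Complex.exp_two_pi_mul_I]
    norm_num
  have hv2π : f (c 0) * Complex.exp (-(Complex.I * (α:ℂ) * ((2 * Real.pi : ℝ):ℂ)))
      = f (c 0) * 1 := by
    have h1 : v (2 * Real.pi) = f (c 0) * Complex.exp (-(Complex.I * (α:ℂ) * ((2 * Real.pi : ℝ):ℂ))) := by
      rw [hv]; simp only []; rw [hc2π]
    have h2 : v 0 = f (c 0) * 1 := by
      rw [hv]; simp
    rw [← h1, ← h2, hconst]
  have hexp1 : Complex.exp (-(Complex.I * (α:ℂ) * ((2 * Real.pi : ℝ):ℂ))) = 1 :=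
    mul_left_cancel₀ (hfne 0) hv2π
  obtain ⟨n, hn⟩ := Complex.exp_eq_one_iff.mp hexp1
  have h2πI : ((2:ℂ) * Real.pi * Complex.I) ≠ 0 := by
    simp [Complex.I_ne_zero, Real.pi_ne_zero, Complex.ofReal_ne_zero]
  have hcast : (-α : ℂ) = (n : ℂ) := by
    apply mul_right_cancel₀ h2πI
    rw [← hn]
    push_cast
    ring
  have hreal : -α = (n : ℝ) := by
    exact_mod_cast hcast
  have hnneg : n < 0 := by
    have : (n:ℝ) < 0 := by rw [← hreal]; linarith
    exact_mod_cast this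
  refine ⟨(-n).toNat, ?_, ?_⟩
  · omega
  · have : ((-n).toNat : ℤ) = -n := Int.toNat_of_nonneg (by omega)
    have h2 : ((-n).toNat : ℝ) = ((-n : ℤ) : ℝ) := by exact_mod_cast this
    rw [h2]
    push_cast
    linarith

lemma const_of_deriv_zero_ann {r : ℝ} (hr0 : 0 < r) (hr1 : r < 1) {h : ℂ → ℂ}
    (hd : ∀ z ∈ ann1 r, HasDerivAt h 0 z) :
    ∀ z ∈ ann1 r, ∀ w ∈ ann1 r, h z = h w := by
  have hopen : IsOpen (ann1 r) :=
    (isOpen_lt continuous_const continuous_norm).inter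
      (isOpen_lt continuous_norm continuous_const)
  -- local constancy on balls
  have hloc : ∀ z₀ ∈ ann1 r, ∃ ε > (0:ℝ), ball z₀ ε ⊆ ann1 r ∧
      ∀ w ∈ ball z₀ ε, h w = h z₀ := by
    intro z₀ hz₀
    obtain ⟨ε, hε, hball⟩ := Metric.isOpen_iff.mp hopen z₀ hz₀
    refine ⟨ε, hε, hball, fun w hw => ?_⟩
    have hconv : Convex ℝ (ball z₀ ε) := convex_ball z₀ ε
    have hdiff : DifferentiableOn ℂ h (ball z₀ ε) := fun x hx =>
      ((hd x (hball hx)).differentiableAt).differentiableWithinAt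
    apply hconv.is_const_of_fderivWithin_eq_zero hdiff _ hw (mem_ball_self hε)
    intro x hx
    have h1 : fderiv ℂ h x = 0 := by
      have := (hd x (hball hx)).hasFDerivAt.fderiv
      rw [this]
      ext v
      simp
    rw [fderivWithin_of_isOpen isOpen_ball hx, h1]
  intro z hz w hw
  set S : Set ℂ := {x ∈ ann1 r | h x = h z} with hS
  set T : Set ℂ := {x ∈ ann1 r | h x ≠ h z} with hT
  have hSopen : IsOpen S := by
    rw [Metric.isOpen_iff]
    rintro x ⟨hx, hhx⟩
    obtain ⟨ε, hε, hball, hconst⟩ := hloc x hx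
    exact ⟨ε, hε, fun y hy => ⟨hball hy, by rw [hconst y hy, hhx]⟩⟩
  have hTopen : IsOpen T := by
    rw [Metric.isOpen_iff]
    rintro x ⟨hx, hhx⟩
    obtain ⟨ε, hε, hball, hconst⟩ := hloc x hx
    exact ⟨ε, hε, fun y hy => ⟨hball hy, by rw [hconst y hy]; exact hhx⟩⟩
  have hpre : IsPreconnected (ann1 r) := annGen_isPreconnected hr0.le
  have hsub : ann1 r ⊆ S ∪ T := by
    intro x hx
    by_cases hc : h x = h z
    · exact Or.inl ⟨hx, hc⟩
    · exact Or.inr ⟨hx, hc⟩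
  have hdisj : Disjoint S T := by
    rw [Set.disjoint_left]
    rintro x ⟨-, hx1⟩ ⟨-, hx2⟩
    exact hx2 hx1
  have hSne : (ann1 r ∩ S).Nonempty := ⟨z, hz, hz, rfl⟩
  have := hpre.subset_left_of_subset_union hSopen hTopen hdisj hsub hSne
  exact ((this hw).2).symm

lemma main_case {r R : ℝ} (hr0 : 0 < r) (hr1 : r < 1) (hR0 : 0 < R) (hR1 : R < 1)
    {f : ℂ → ℂ} (hdiff : DifferentiableOn ℂ f (ann1 r))
    (hmaps : Set.MapsTo f (ann1 r) (ann1 R))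
    (hout : ∀ ε > (0:ℝ), ∃ δ > (0:ℝ), ∀ z ∈ ann1 r, 1 - δ < ‖z‖ → 1 - ε < ‖f z‖)
    (hin : ∀ ε > (0:ℝ), ∃ δ > (0:ℝ), ∀ z ∈ ann1 r, ‖z‖ < r + δ → ‖f z‖ < R + ε) :
    ∃ (d : ℕ) (θ : ℝ), 1 ≤ d ∧ R = r ^ d ∧
      ∀ z ∈ ann1 r, f z = Complex.exp ((θ:ℂ) * Complex.I) * z ^ d := by
  have hopen : IsOpen (ann1 r) :=
    (isOpen_lt continuous_const continuous_norm).inter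
      (isOpen_lt continuous_norm continuous_const)
  have hlr : Real.log r < 0 := Real.log_neg hr0 hr1
  have hlR : Real.log R < 0 := Real.log_neg hR0 hR1
  set α : ℝ := Real.log R / Real.log r with hα
  have hαpos : 0 < α := div_pos_iff.mpr (Or.inr ⟨hlR, hlr⟩)
  have hαr : α * Real.log r = Real.log R := by
    rw [hα, div_mul_cancel₀ _ (ne_of_lt hlr)]
  have habs := log_abs_eq hr0 hr1 hR0 hR1 hdiff hmaps hout hin
  have hderiv := deriv_ratio hr0 hr1 hR0 hdiff hmaps habs
  obtain ⟨d, hd1, hdα⟩ := alpha_integer hr0 hr1 hR0 hdiff hmaps hαpos hderiv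
  have hRrd : R = r ^ d := by
    have h1 : Real.log R = Real.log (r ^ d) := by
      rw [Real.log_pow, ← hαr, hdα]
    have h2 : R = Real.exp (Real.log R) := (Real.exp_log hR0).symm
    rw [h2, h1, Real.exp_log (pow_pos hr0 d)]
  -- f z / z^d is constant
  have hzne : ∀ z ∈ ann1 r, z ≠ 0 := by
    intro z hz h0
    rw [h0] at hz; have := hz.1; rw [norm_zero] at this; linarith
  have hfne : ∀ z ∈ ann1 r, f z ≠ 0 := by
    intro z hz h0
    have := (hmaps hz).1; rw [h0, norm_zero] at this; linarith
  obtain ⟨e, rfl⟩ : ∃ e, d = e + 1 := ⟨d - 1, by omega⟩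
  have hhd : ∀ z ∈ ann1 r, HasDerivAt (fun x => f x / x ^ (e+1)) 0 z := by
    intro z hz
    have hfa : DifferentiableAt ℂ f z :=
      (hdiff z hz).differentiableAt (hopen.mem_nhds hz)
    have hpow : HasDerivAt (fun x : ℂ => x ^ (e+1)) (((e:ℂ)+1) * z ^ e) z := by
      have := hasDerivAt_pow (e+1) z
      refine this.congr_deriv ?_
      push_cast; ring_nf
    have hdiv := hfa.hasDerivAt.div hpow (pow_ne_zero (e+1) (hzne z hz))
    refine hdiv.congr_deriv ?_
    have hnum : deriv f z * z ^ (e+1) - f z * (((e:ℂ)+1) * z ^ e) = 0 := by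
      have h1 := hderiv z hz
      have hcast : ((α:ℝ):ℂ) = ((e:ℂ)+1) := by
        rw [hdα]; push_cast; ring
      calc deriv f z * z ^ (e+1) - f z * (((e:ℂ)+1) * z ^ e)
          = (deriv f z * z) * z ^ e - f z * (((e:ℂ)+1) * z ^ e) := by ring
        _ = ((α:ℂ) * f z) * z ^ e - f z * (((e:ℂ)+1) * z ^ e) := by rw [h1]
        _ = 0 := by rw [hcast]; ring
    rw [hnum, zero_div]
  have hconst := const_of_deriv_zero_ann hr0 hr1 hhd
  set z₁ : ℂ := (((r+1)/2 : ℝ) : ℂ) with hz₁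
  have hz₁mem := mem_ann1_mid hr0 hr1
  set c : ℂ := f z₁ / z₁ ^ (e+1) with hc
  have hfzc : ∀ z ∈ ann1 r, f z = c * z ^ (e+1) := by
    intro z hz
    have := hconst z hz z₁ hz₁mem
    rw [div_eq_iff (pow_ne_zero (e+1) (hzne z hz))] at this
    rw [this, hc]
  -- |c| = 1
  have hcabs : ‖c‖ = 1 := by
    have h1 := habs z₁ hz₁mem
    have h2 := hfzc z₁ hz₁mem
    have hz₁0 : (0:ℝ) < ‖z₁‖ := lt_trans hr0 hz₁mem.1
    have hc0 : c ≠ 0 := by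
      intro h0
      exact hfne z₁ hz₁mem (by rw [h2, h0, zero_mul])
    have h3 : Real.log ‖c * z₁ ^ (e+1)‖ = α * Real.log ‖z₁‖ := by rw [← h2]; exact h1
    rw [norm_mul, norm_pow, Real.log_mul (norm_ne_zero_iff.mpr hc0)
      (by positivity), Real.log_pow] at h3
    have h4 : Real.log ‖c‖ = 0 := by
      rw [hdα] at h3
      push_cast at h3
      linarith
    rcases Real.log_eq_zero.mp h4 with h | h | h
    · exact absurd h (norm_ne_zero_iff.mpr hc0)
    · exact h
    · linarith [norm_nonneg c]
  refine ⟨e+1, Complex.arg c, hd1, hRrd, fun z hz => ?_⟩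
  rw [hfzc z hz]
  congr 1
  have := Complex.norm_mul_exp_arg_mul_I c
  rw [hcabs] at this
  simpa using this.symm

lemma inv_mem_ann {r : ℝ} (hr0 : 0 < r) (hr1 : r < 1) {z : ℂ} (hz : z ∈ ann1 r) :
    (r : ℂ) / z ∈ ann1 r := by
  have hz0 : (0:ℝ) < ‖z‖ := lt_trans hr0 hz.1
  have hnorm : ‖(r:ℂ)/z‖ = r / ‖z‖ := by
    rw [norm_div, Complex.norm_real, Real.norm_eq_abs, abs_of_pos hr0]
  constructor
  · rw [hnorm]
    rw [lt_div_iff₀ hz0]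
    nlinarith [hz.2]
  · rw [hnorm, div_lt_one hz0]
    exact hz.1

lemma inverted_case {r R : ℝ} (hr0 : 0 < r) (hr1 : r < 1) (hR0 : 0 < R) (hR1 : R < 1)
    {f : ℂ → ℂ} (hdiff : DifferentiableOn ℂ f (ann1 r))
    (hmaps : Set.MapsTo f (ann1 r) (ann1 R))
    (hout : ∀ ε > (0:ℝ), ∃ δ > (0:ℝ), ∀ z ∈ ann1 r, 1 - δ < ‖z‖ → ‖f z‖ < R + ε)
    (hin : ∀ ε > (0:ℝ), ∃ δ > (0:ℝ), ∀ z ∈ ann1 r, ‖z‖ < r + δ → 1 - ε < ‖f z‖) :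
    ∃ (d : ℕ) (θ : ℝ), 1 ≤ d ∧ R = r ^ d ∧
      ∀ z ∈ ann1 r, f z = (r:ℂ) ^ d * Complex.exp ((θ:ℂ) * Complex.I) * z ^ (-(d:ℤ)) := by
  set F : ℂ → ℂ := fun z => f ((r:ℂ)/z) with hF
  have hzne : ∀ z ∈ ann1 r, z ≠ 0 := by
    intro z hz h0
    rw [h0] at hz; have := hz.1; rw [norm_zero] at this; linarith
  have hnormdiv : ∀ z ∈ ann1 r, ‖(r:ℂ)/z‖ = r / ‖z‖ := by
    intro z hz
    rw [norm_div, Complex.norm_real, Real.norm_eq_abs, abs_of_pos hr0]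
  have hinv : ∀ z ∈ ann1 r, (r:ℂ)/z ∈ ann1 r := fun z hz => inv_mem_ann hr0 hr1 hz
  have hFdiff : DifferentiableOn ℂ F (ann1 r) := by
    apply hdiff.comp
    · exact (differentiableOn_const _).div differentiableOn_id (fun z hz => hzne z hz)
    · exact hinv
  have hFmaps : Set.MapsTo F (ann1 r) (ann1 R) := fun z hz => hmaps (hinv z hz)
  have hFout : ∀ ε > (0:ℝ), ∃ δ > (0:ℝ), ∀ z ∈ ann1 r, 1 - δ < ‖z‖ → 1 - ε < ‖F z‖ := by
    intro ε hε
    obtain ⟨δ₂, hδ₂, h₂⟩ := hin ε hε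
    refine ⟨δ₂/(r+δ₂), by positivity, fun z hz hcol => ?_⟩
    apply h₂ _ (hinv z hz)
    rw [hnormdiv z hz]
    have hz0 : (0:ℝ) < ‖z‖ := lt_trans hr0 hz.1
    rw [div_lt_iff₀ hz0]
    have hkey : 1 - δ₂/(r+δ₂) = r/(r+δ₂) := by
      field_simp
      ring
    rw [hkey] at hcol
    rw [div_lt_iff₀ (by linarith : (0:ℝ) < r+δ₂)] at hcol
    nlinarith
  have hFin : ∀ ε > (0:ℝ), ∃ δ > (0:ℝ), ∀ z ∈ ann1 r, ‖z‖ < r + δ → ‖F z‖ < R + ε := by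
    intro ε hε
    obtain ⟨δ₁, hδ₁, h₁⟩ := hout ε hε
    refine ⟨r*δ₁, by positivity, fun z hz hcol => ?_⟩
    apply h₁ _ (hinv z hz)
    rw [hnormdiv z hz]
    have hz0 : (0:ℝ) < ‖z‖ := lt_trans hr0 hz.1
    rw [lt_div_iff₀ hz0]
    rcases le_or_gt (1 - δ₁) 0 with h | h
    · nlinarith
    · nlinarith [mul_lt_mul_of_pos_left hcol h, sq_nonneg δ₁]
  obtain ⟨d, θ, hd1, hRrd, hform⟩ :=
    main_case hr0 hr1 hR0 hR1 hFdiff hFmaps hFout hFin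
  refine ⟨d, θ, hd1, hRrd, fun w hw => ?_⟩
  have hw0 : w ≠ 0 := hzne w hw
  have hr0' : (r:ℂ) ≠ 0 := by
    simpa using hr0.ne'
  have hzw : (r:ℂ)/((r:ℂ)/w) = w := by
    field_simp
  have := hform ((r:ℂ)/w) (hinv w hw)
  rw [hF] at this
  simp only [] at this
  rw [hzw] at this
  rw [this, div_pow, zpow_neg, zpow_natCast]
  field_simp


/-- **Proper maps of one-dimensional annuli.** If `f : A_{1,r} → A_{1,R}` is a proper
holomorphic map, then `R = r^d` for some `d ≥ 1` and `f(z) = e^{iθ}·z^d` or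
`f(z) = r^d·e^{iθ}·z^{−d}`. -/
theorem proper_maps_one_dim_annuli (r R : ℝ) (hr0 : 0 < r) (hr1 : r < 1)
    (hR0 : 0 < R) (hR1 : R < 1) (f : ℂ → ℂ)
    (hdiff : DifferentiableOn ℂ f (ann1 r))
    (hmaps : Set.MapsTo f (ann1 r) (ann1 R))
    (hprop : ProperOn f (ann1 r) (ann1 R)) :
    ∃ (d : ℕ) (θ : ℝ), 1 ≤ d ∧ R = r ^ d ∧
      ((∀ z ∈ ann1 r, f z = Complex.exp (θ * Complex.I) * z ^ d) ∨
        (∀ z ∈ ann1 r, f z = (r : ℂ) ^ d * Complex.exp (θ * Complex.I) * z ^ (-(d : ℤ)))) := by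
  have hesc : ∀ a b : ℝ, R < a → a ≤ b → b < 1 →
      ∃ δ > (0:ℝ), ∀ z ∈ ann1 r, (1 - δ < ‖z‖ ∨ ‖z‖ < r + δ) →
        (‖f z‖ < a ∨ b < ‖f z‖) :=
    fun a b ha hab hb => collar_escape hr0 hr1 hR0 hR1 hprop ha hab hb
  have hcont : ContinuousOn f (ann1 r) := hdiff.continuousOn
  rcases outer_dichotomy hr0 hr1 hR0 hR1 hcont hmaps hesc with hP1 | hPR
  · rcases inner_dichotomy hr0 hr1 hR0 hR1 hcont hesc with hQ1 | hQR
    · exact absurd (not_both_one hr0 hr1 hR0 hR1 hdiff hmaps hP1 hQ1) (fun h => h)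
    · obtain ⟨d, θ, hd1, hRrd, hform⟩ :=
        main_case hr0 hr1 hR0 hR1 hdiff hmaps hP1 hQR
      exact ⟨d, θ, hd1, hRrd, Or.inl hform⟩
  · rcases inner_dichotomy hr0 hr1 hR0 hR1 hcont hesc with hQ1 | hQR
    · obtain ⟨d, θ, hd1, hRrd, hform⟩ :=
        inverted_case hr0 hr1 hR0 hR1 hdiff hmaps hPR hQ1
      exact ⟨d, θ, hd1, hRrd, Or.inr hform⟩
    · exact absurd (not_both_R hr0 hr1 hR0 hR1 hdiff hmaps hPR hQR) (fun h => h)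
end
end

section
/- Let n ≥ 2, 0 < r < 1, 0 < R < 1, and let f : A_{n,r} → A_{n,R} be a proper holomorphic map of the form f(z) = (Az + b)/(⟨z,c⟩ + e), where A is an n×n complex matrix, b, c ∈ ℂⁿ, e ∈ ℂ, the denominator ⟨z,c⟩ + e is nonvanishing on A_{n,r}, and f is nonconstant (i.e., f is rational of degree 1). Then r = R and f is a unitary map: there is a unitary U ∈ U(n) with f(z) = Uz for all z ∈ A_{n,r}. -/
noncomputable section

open scoped BigOperators

/-- The annulus `A_{n,r} = { z ∈ ℂⁿ : r < ‖z‖ < 1 }`. -/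
def ann (n : ℕ) (r : ℝ) : Set (EuclideanSpace ℂ (Fin n)) :=
  {z | r < ‖z‖ ∧ ‖z‖ < 1}

/-- A proper holomorphic map from `S` to `T`. -/
def IsProperHolo {E F : Type*} [NormedAddCommGroup E] [NormedSpace ℂ E]
    [NormedAddCommGroup F] [NormedSpace ℂ F]
    (f : E → F) (S : Set E) (T : Set F) : Prop :=
  DifferentiableOn ℂ f S ∧ Set.MapsTo f S T ∧ ProperOn f S T

/-- Dimension of the affine hull (smallest affine subspace containing `S`). -/
def affDim {F : Type*} [NormedAddCommGroup F] [NormedSpace ℂ F] (S : Set F) : ℕ :=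
  Module.finrank ℂ (affineSpan ℂ S).direction

/-- The general hyperplane rank `k_f`: the maximum over all complex affine hyperplanes
`H ⊆ ℂⁿ` of the dimension of the affine hull of `f(H ∩ U)`. -/
def genHypRank {n : ℕ} {F : Type*} [NormedAddCommGroup F] [NormedSpace ℂ F]
    (U : Set (EuclideanSpace ℂ (Fin n))) (f : EuclideanSpace ℂ (Fin n) → F) : ℕ :=
  sSup {k : ℕ | ∃ (a : Fin n → ℂ) (b : ℂ), a ≠ 0 ∧
    k = affDim (f '' ({z | (∑ i, a i * z i) = b} ∩ U))}

/-- Embedding dimension `N_f`: dimension of the affine hull of the image. -/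
def embDim {n : ℕ} {F : Type*} [NormedAddCommGroup F] [NormedSpace ℂ F]
    (U : Set (EuclideanSpace ℂ (Fin n))) (f : EuclideanSpace ℂ (Fin n) → F) : ℕ :=
  affDim (f '' U)

/-- Multi-indices `α` on `n` variables with `|α| = d`. -/
abbrev MIdx (n d : ℕ) := {α : Fin n → Fin (d + 1) // ∑ i, (α i : ℕ) = d}

/-- The homogeneous map `H_d` with components `√(d!/α!)·z^α`, indexed by multi-indices of
degree `d`. -/
def Hd (n d : ℕ) (z : EuclideanSpace ℂ (Fin n)) : EuclideanSpace ℂ (MIdx n d) :=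
  WithLp.toLp 2 fun α => (Real.sqrt ((d.factorial : ℝ) / ∏ i, ((α.1 i : ℕ).factorial : ℝ)) : ℂ) *
    ∏ i, z i ^ (α.1 i : ℕ)

/-- `(w₁,…,w_m, c, 0, …, 0) ∈ ℂᴺ`. -/
def pad {m : ℕ} (N : ℕ) (w : EuclideanSpace ℂ (Fin m)) (c : ℂ) : EuclideanSpace ℂ (Fin N) :=
  WithLp.toLp 2 fun (j : Fin N) => if h : (j : ℕ) < m then w ⟨j, h⟩ else if (j : ℕ) = m then c else 0

/-- Evaluate a polynomial at a point of `ℂⁿ`. -/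
def evalP {n : ℕ} (q : MvPolynomial (Fin n) ℂ) (z : EuclideanSpace ℂ (Fin n)) : ℂ :=
  MvPolynomial.eval (fun i => z i) q

/-- The rational map `p/q`. -/
def ratMap {n N : ℕ} (p : Fin N → MvPolynomial (Fin n) ℂ) (q : MvPolynomial (Fin n) ℂ)
    (z : EuclideanSpace ℂ (Fin n)) : EuclideanSpace ℂ (Fin N) :=
  WithLp.toLp 2 fun j => evalP (p j) z / evalP q z

/-- Unitary equivalence of maps on a set `S`. -/
def UnitarilyEquiv {n N : ℕ} (S : Set (EuclideanSpace ℂ (Fin n)))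
    (f g : EuclideanSpace ℂ (Fin n) → EuclideanSpace ℂ (Fin N)) : Prop :=
  ∃ (V : EuclideanSpace ℂ (Fin n) ≃ₗᵢ[ℂ] EuclideanSpace ℂ (Fin n))
    (W : EuclideanSpace ℂ (Fin N) ≃ₗᵢ[ℂ] EuclideanSpace ℂ (Fin N)),
    ∀ z ∈ S, f z = W (g (V z))

set_option maxHeartbeats 1000000 in
/-- **Degree-one equidimensional maps of annuli.** If `f : A_{n,r} → A_{n,R}` (`n ≥ 2`) is
a proper holomorphic map of the form `f(z) = (Az+b)/(⟨z,c⟩+e)` (nonvanishing denominator,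
`f` nonconstant), then `r = R` and `f` is a unitary map. -/
theorem degree_one_equidim (n : ℕ) (hn : 2 ≤ n) (r R : ℝ) (hr0 : 0 < r) (hr1 : r < 1)
    (hR0 : 0 < R) (hR1 : R < 1)
    (f : EuclideanSpace ℂ (Fin n) → EuclideanSpace ℂ (Fin n))
    (A : Matrix (Fin n) (Fin n) ℂ) (b c : Fin n → ℂ) (e : ℂ)
    (hden : ∀ z ∈ ann n r, (∑ i, z i * (starRingEnd ℂ) (c i)) + e ≠ 0)
    (hform : ∀ z ∈ ann n r, ∀ j,
      f z j = (A.mulVec (fun i => z i) j + b j) / ((∑ i, z i * (starRingEnd ℂ) (c i)) + e))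
    (hnonconst : ∃ z ∈ ann n r, ∃ w ∈ ann n r, f z ≠ f w)
    (hf : IsProperHolo f (ann n r) (ann n R)) :
    r = R ∧ ∃ U : EuclideanSpace ℂ (Fin n) ≃ₗᵢ[ℂ] EuclideanSpace ℂ (Fin n),
      ∀ z ∈ ann n r, f z = U z := by
  classical
  obtain ⟨hdiff, hmaps, hproper⟩ := hf
  -- notation
  set d : EuclideanSpace ℂ (Fin n) → ℂ :=
    fun z => (∑ i, z i * (starRingEnd ℂ) (c i)) + e with hd_def
  set v : EuclideanSpace ℂ (Fin n) → EuclideanSpace ℂ (Fin n) :=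
    fun z => WithLp.toLp 2 (fun j => A.mulVec (fun i => z i) j) with hv_def
  set bE : EuclideanSpace ℂ (Fin n) := WithLp.toLp 2 (fun j => b j) with hbE_def
  set Nm : EuclideanSpace ℂ (Fin n) → EuclideanSpace ℂ (Fin n) :=
    fun z => v z + bE with hNm_def
  have hannopen : ∀ ρ : ℝ, IsOpen (ann n ρ) := by
    intro ρ
    have : ann n ρ = (fun z : EuclideanSpace ℂ (Fin n) => ‖z‖) ⁻¹' Set.Ioo ρ 1 := rfl
    rw [this]; exact isOpen_Ioo.preimage continuous_norm
  have hvsmul : ∀ (t : ℂ) (z : EuclideanSpace ℂ (Fin n)), v (t • z) = t • v z := by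
    intro t z
    ext j
    show A.mulVec (fun i => (t • z) i) j = (t • v z) j
    have h1 : (fun i => (t • z) i) = t • (fun i => z i) := rfl
    rw [h1, Matrix.mulVec_smul]
    rfl
  have hvadd : ∀ (z w : EuclideanSpace ℂ (Fin n)), v (z + w) = v z + v w := by
    intro z w
    ext j
    show A.mulVec (fun i => (z + w) i) j = (v z + v w) j
    have h1 : (fun i => (z + w) i) = (fun i => z i) + (fun i => w i) := rfl
    rw [h1, Matrix.mulVec_add]
    rfl
  set T : EuclideanSpace ℂ (Fin n) →ₗ[ℂ] EuclideanSpace ℂ (Fin n) :=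
    { toFun := v, map_add' := hvadd, map_smul' := hvsmul } with hT_def
  have hvcont : Continuous v := T.continuous_of_finiteDimensional
  have hdsmul : ∀ (t : ℂ) (z : EuclideanSpace ℂ (Fin n)), d (t • z) = t * (d z - e) + e := by
    intro t z
    have h1 : ∀ i, (t • z) i = t * z i := fun i => rfl
    simp only [hd_def, h1, add_sub_cancel_right, Finset.mul_sum, mul_assoc]
  have hdcont : Continuous d := by
    have hld : Continuous (fun z : EuclideanSpace ℂ (Fin n) => d z - e) := by
      have hl : IsLinearMap ℂ (fun z : EuclideanSpace ℂ (Fin n) => d z - e) := by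
        constructor
        · intro x y
          simp only [hd_def, add_sub_cancel_right]
          rw [← Finset.sum_add_distrib]
          congr 1; funext i
          show (x + y) i * _ = _
          have : (x + y) i = x i + y i := rfl
          rw [this, add_mul]
        · intro m x
          simp only [hd_def, add_sub_cancel_right, smul_eq_mul, Finset.mul_sum]
          congr 1; funext i
          have : (m • x) i = m * x i := rfl
          rw [this, mul_assoc]
      exact (hl.mk' _).continuous_of_finiteDimensional
    have : d = (fun z => (d z - e) + e) := by funext z; ring
    rw [this]
    exact hld.add continuous_const
  have hNmcont : Continuous Nm := hvcont.add continuous_const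
  have hfval : ∀ z ∈ ann n r, f z = (d z)⁻¹ • Nm z := by
    intro z hz
    ext j
    rw [hform z hz j]
    show _ = (d z)⁻¹ * (Nm z j)
    rw [div_eq_inv_mul]
    rfl
  have hfnorm : ∀ z ∈ ann n r, ‖f z‖ = ‖Nm z‖ / ‖d z‖ := by
    intro z hz
    rw [hfval z hz, norm_smul, norm_inv, ← div_eq_inv_mul]
  -- limit lemma from properness
  have hlim : ∀ (l : Filter ℝ), l.NeBot → ∀ (u : ℝ → EuclideanSpace ℂ (Fin n))
      (zs w : EuclideanSpace ℂ (Fin n)), w ∈ ann n R →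
      Filter.Tendsto u l (nhds zs) → Filter.Tendsto (fun t => f (u t)) l (nhds w) →
      (∀ᶠ t in l, u t ∈ ann n r) → zs ∈ ann n r := by
    intro l hl u zs w hw hu hfu hann
    haveI := hl
    obtain ⟨ε, hε, hball⟩ := Metric.isOpen_iff.mp (hannopen R) w hw
    have hK : IsCompact (Metric.closedBall w (ε/2)) := isCompact_closedBall _ _
    have hKsub : Metric.closedBall w (ε/2) ⊆ ann n R :=
      (Metric.closedBall_subset_ball (by linarith)).trans hball
    have hP := hproper _ hKsub hK
    have hPcl : IsClosed (ann n r ∩ f ⁻¹' Metric.closedBall w (ε/2)) := hP.isClosed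
    have hev : ∀ᶠ t in l, u t ∈ ann n r ∩ f ⁻¹' Metric.closedBall w (ε/2) := by
      filter_upwards [hann, hfu (Metric.closedBall_mem_nhds (ε := ε/2) w (by linarith))] with t h1 h2
      exact ⟨h1, h2⟩
    exact (hPcl.mem_of_tendsto hu hev).1
  -- generic facts about the ray t ↦ (t/‖zs‖) • zs
  have hunorm : ∀ (zs : EuclideanSpace ℂ (Fin n)) (t : ℝ), 0 < t → 0 < ‖zs‖ →
      ‖(((t / ‖zs‖ : ℝ) : ℂ)) • zs‖ = t := by
    intro zs t ht hzs
    rw [norm_smul, Complex.norm_real, Real.norm_eq_abs, abs_div, abs_of_pos ht,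
      abs_of_pos hzs, div_mul_cancel₀]
    exact hzs.ne'
  have hucont : ∀ zs : EuclideanSpace ℂ (Fin n),
      Continuous (fun t : ℝ => (((t / ‖zs‖ : ℝ) : ℂ)) • zs) :=
    fun zs => (Complex.continuous_ofReal.comp (continuous_id.div_const ‖zs‖)).smul
      continuous_const
  have huself : ∀ zs : EuclideanSpace ℂ (Fin n), 0 < ‖zs‖ →
      ((((‖zs‖ / ‖zs‖ : ℝ) : ℂ)) • zs) = zs := by
    intro zs h
    rw [div_self h.ne', Complex.ofReal_one, one_smul]
  have hnebot : ∀ t0 : ℝ, t0 = r ∨ t0 = 1 → (nhdsWithin t0 (Set.Ioo r 1)).NeBot := by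
    intro t0 ht0
    apply mem_closure_iff_nhdsWithin_neBot.mp
    rw [closure_Ioo hr1.ne]
    rcases ht0 with h | h <;> rw [h]
    · exact ⟨le_refl r, hr1.le⟩
    · exact ⟨hr1.le, le_refl 1⟩
  -- the ray contradiction
  have hray : ∀ (zs w : EuclideanSpace ℂ (Fin n)), (‖zs‖ = r ∨ ‖zs‖ = 1) → w ∈ ann n R →
      (∀ t : ℝ, t ∈ Set.Ioo r 1 → f ((((t / ‖zs‖ : ℝ) : ℂ)) • zs) = w) → False := by
    intro zs w hzs hw hconst
    have ht0pos : 0 < ‖zs‖ := by rcases hzs with h | h <;> rw [h] <;> linarith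
    haveI hne : (nhdsWithin ‖zs‖ (Set.Ioo r 1)).NeBot := hnebot _ hzs
    set u : ℝ → EuclideanSpace ℂ (Fin n) := fun t => (((t / ‖zs‖ : ℝ) : ℂ)) • zs with hu_def
    have htu : Filter.Tendsto u (nhdsWithin ‖zs‖ (Set.Ioo r 1)) (nhds zs) := by
      apply Filter.Tendsto.mono_left _ (nhdsWithin_le_nhds (s := Set.Ioo r 1))
      have h0 := (hucont zs).tendsto ‖zs‖
      simpa [hu_def, div_self ht0pos.ne'] using h0
    have hann' : ∀ᶠ t in nhdsWithin ‖zs‖ (Set.Ioo r 1), u t ∈ ann n r := by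
      filter_upwards [self_mem_nhdsWithin] with t ht
      have h1 : ‖u t‖ = t := hunorm zs t (lt_trans hr0 ht.1) ht0pos
      exact ⟨by rw [h1]; exact ht.1, by rw [h1]; exact ht.2⟩
    have hfu : Filter.Tendsto (fun t => f (u t)) (nhdsWithin ‖zs‖ (Set.Ioo r 1)) (nhds w) := by
      apply Filter.Tendsto.congr' _ tendsto_const_nhds
      filter_upwards [self_mem_nhdsWithin] with t ht
      exact (hconst t ht).symm
    have := hlim _ hne u zs w hw htu hfu hann'
    rcases hzs with h | h
    · exact absurd this.1 (by rw [h]; exact lt_irrefl r)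
    · exact absurd this.2 (by rw [h]; exact lt_irrefl 1)
  -- norms lie in [r,1] give nonvanishing denominator
  have hA0 : ∀ z : EuclideanSpace ℂ (Fin n), r ≤ ‖z‖ → ‖z‖ ≤ 1 → d z ≠ 0 := by
    intro z hge hle hd0
    have hz_ann : z ∉ ann n r := fun hz => hden z hz hd0
    have ht0 : ‖z‖ = r ∨ ‖z‖ = 1 := by
      rcases eq_or_lt_of_le hge with h | h
      · exact Or.inl h.symm
      · rcases eq_or_lt_of_le hle with h' | h'
        · exact Or.inr h'
        · exact absurd ⟨h, h'⟩ hz_ann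
    have ht0pos : 0 < ‖z‖ := by rcases ht0 with h | h <;> rw [h] <;> linarith
    set u : ℝ → EuclideanSpace ℂ (Fin n) := fun t => (((t / ‖z‖ : ℝ) : ℂ)) • z with hu_def
    have hu_ann : ∀ t ∈ Set.Ioo r 1, u t ∈ ann n r := by
      intro t ht
      have h1 : ‖u t‖ = t := hunorm z t (lt_trans hr0 ht.1) ht0pos
      exact ⟨by rw [h1]; exact ht.1, by rw [h1]; exact ht.2⟩
    have hdu : ∀ t : ℝ, d (u t) = e * (1 - ((t / ‖z‖ : ℝ) : ℂ)) := by
      intro t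
      show d ((((t / ‖z‖ : ℝ) : ℂ)) • z) = _
      rw [hdsmul, hd0]
      ring
    have ht1 : (r + 1) / 2 ∈ Set.Ioo r 1 := ⟨by linarith, by linarith⟩
    by_cases he : e = 0
    · exact hden _ (hu_ann _ ht1) (by rw [show (∑ i, (u ((r+1)/2)) i * (starRingEnd ℂ) (c i))
        + e = d (u ((r+1)/2)) from rfl, hdu, he, zero_mul])
    · haveI hne : (nhdsWithin ‖z‖ (Set.Ioo r 1)).NeBot := hnebot _ ht0
      have htu : Filter.Tendsto u (nhdsWithin ‖z‖ (Set.Ioo r 1)) (nhds z) := by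
        apply Filter.Tendsto.mono_left _ (nhdsWithin_le_nhds (s := Set.Ioo r 1))
        have h0 := (hucont z).tendsto ‖z‖
        simpa [hu_def, div_self ht0pos.ne'] using h0
      have hNmz : Nm z = 0 := by
        have h1 : Filter.Tendsto (fun t => ‖Nm (u t)‖) (nhdsWithin ‖z‖ (Set.Ioo r 1))
            (nhds ‖Nm z‖) := ((hNmcont.tendsto z).comp htu).norm
        have h2 : Filter.Tendsto (fun t => ‖d (u t)‖) (nhdsWithin ‖z‖ (Set.Ioo r 1))
            (nhds 0) := by
          have := ((hdcont.tendsto z).comp htu).norm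
          rwa [hd0, norm_zero] at this
        have h3 : ∀ᶠ t in nhdsWithin ‖z‖ (Set.Ioo r 1), ‖Nm (u t)‖ ≤ ‖d (u t)‖ := by
          filter_upwards [self_mem_nhdsWithin] with t ht
          have hua := hu_ann t ht
          have hfu1 : ‖f (u t)‖ < 1 := (hmaps hua).2
          rw [hfnorm _ hua] at hfu1
          have hdne : ‖d (u t)‖ > 0 := norm_pos_iff.mpr (hden _ hua)
          have := (div_lt_one hdne).mp hfu1
          linarith
        have := le_of_tendsto_of_tendsto h1 h2 h3
        exact norm_le_zero_iff.mp this
      have hvz : v z = -bE := by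
        have : v z + bE = 0 := hNmz
        linear_combination (norm := module) this
      set w : EuclideanSpace ℂ (Fin n) := (e⁻¹ : ℂ) • bE with hw_def
      have hconst : ∀ t : ℝ, t ∈ Set.Ioo r 1 → f (u t) = w := by
        intro t ht
        have hua := hu_ann t ht
        have h1t : (1 : ℂ) - ((t / ‖z‖ : ℝ) : ℂ) ≠ 0 := by
          rw [sub_ne_zero]
          intro h
          have : (t / ‖z‖ : ℝ) = 1 := by exact_mod_cast h.symm
          have ht' : t = ‖z‖ := by
            field_simp at this
            linarith [this]
          rcases ht0 with h' | h' <;> rw [h'] at ht' <;>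
            [exact absurd ht.1 (by rw [ht']; exact lt_irrefl r);
             exact absurd ht.2 (by rw [ht']; exact lt_irrefl 1)]
        have hNmu : Nm (u t) = ((1 : ℂ) - ((t / ‖z‖ : ℝ) : ℂ)) • bE := by
          show v (u t) + bE = _
          rw [hu_def]
          rw [hvsmul, hvz, smul_neg, sub_smul, one_smul]
          abel
        rw [hfval _ hua, hNmu, hdu, mul_inv, smul_smul]
        rw [hw_def]
        congr 1
        rw [mul_assoc, inv_mul_cancel₀ h1t, mul_one]
      have hwann : w ∈ ann n R := by
        have := hmaps (hu_ann _ ht1)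
        rwa [hconst _ ht1] at this
      exact hray z w ht0 hwann hconst
  -- boundary spheres go to boundary spheres
  have hsphere : ∀ t0 : ℝ, t0 = r ∨ t0 = 1 →
      ∃ ρ, (ρ = R ∨ ρ = 1) ∧ ∀ z : EuclideanSpace ℂ (Fin n), ‖z‖ = t0 →
        ‖Nm z‖ = ρ * ‖d z‖ := by
    intro t0 ht0
    have ht0pos : 0 < t0 := by rcases ht0 with h | h <;> rw [h] <;> linarith
    have ht0r : r ≤ t0 := by rcases ht0 with h | h <;> rw [h] <;> linarith
    have ht01 : t0 ≤ 1 := by rcases ht0 with h | h <;> rw [h] <;> linarith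
    -- pointwise statement
    have hpt : ∀ z : EuclideanSpace ℂ (Fin n), ‖z‖ = t0 →
        ‖Nm z‖ / ‖d z‖ = R ∨ ‖Nm z‖ / ‖d z‖ = 1 := by
      intro z hz
      have hdz : d z ≠ 0 := hA0 z (by rw [hz]; exact ht0r) (by rw [hz]; exact ht01)
      have ht0' : ‖z‖ = r ∨ ‖z‖ = 1 := by rcases ht0 with h | h <;> rw [hz, h] <;> simp
      have hzpos : 0 < ‖z‖ := by rw [hz]; exact ht0pos
      haveI hne : (nhdsWithin ‖z‖ (Set.Ioo r 1)).NeBot := hnebot _ ht0'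
      set u : ℝ → EuclideanSpace ℂ (Fin n) := fun t => (((t / ‖z‖ : ℝ) : ℂ)) • z with hu_def
      have hu_ann : ∀ t ∈ Set.Ioo r 1, u t ∈ ann n r := by
        intro t ht
        have h1 : ‖u t‖ = t := hunorm z t (lt_trans hr0 ht.1) hzpos
        exact ⟨by rw [h1]; exact ht.1, by rw [h1]; exact ht.2⟩
      have htu : Filter.Tendsto u (nhdsWithin ‖z‖ (Set.Ioo r 1)) (nhds z) := by
        apply Filter.Tendsto.mono_left _ (nhdsWithin_le_nhds (s := Set.Ioo r 1))
        have h0 := (hucont z).tendsto ‖z‖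
        simpa [hu_def, div_self hzpos.ne'] using h0
      set w : EuclideanSpace ℂ (Fin n) := (d z)⁻¹ • Nm z with hw_def
      have hgu : Filter.Tendsto (fun t => (d (u t))⁻¹ • Nm (u t))
          (nhdsWithin ‖z‖ (Set.Ioo r 1)) (nhds w) := by
        exact (((hdcont.tendsto z).comp htu).inv₀ hdz).smul ((hNmcont.tendsto z).comp htu)
      have hfu : Filter.Tendsto (fun t => f (u t)) (nhdsWithin ‖z‖ (Set.Ioo r 1)) (nhds w) := by
        apply Filter.Tendsto.congr' _ hgu
        filter_upwards [self_mem_nhdsWithin] with t ht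
        exact (hfval _ (hu_ann t ht)).symm
      have hwnorm : ‖w‖ = ‖Nm z‖ / ‖d z‖ := by
        rw [hw_def, norm_smul, norm_inv, ← div_eq_inv_mul]
      have hnw1 : ‖w‖ ≤ 1 := by
        apply le_of_tendsto hfu.norm
        filter_upwards [self_mem_nhdsWithin] with t ht
        exact (hmaps (hu_ann t ht)).2.le
      have hnwR : R ≤ ‖w‖ := by
        apply ge_of_tendsto hfu.norm
        filter_upwards [self_mem_nhdsWithin] with t ht
        exact (hmaps (hu_ann t ht)).1.le
      have hnotin : ¬(R < ‖w‖ ∧ ‖w‖ < 1) := by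
        rintro ⟨h1, h2⟩
        have hzann := hlim _ hne u z w ⟨h1, h2⟩ htu hfu (by
          filter_upwards [self_mem_nhdsWithin] with t ht
          exact hu_ann t ht)
        rcases ht0' with h | h
        · exact absurd hzann.1 (by rw [h]; exact lt_irrefl r)
        · exact absurd hzann.2 (by rw [h]; exact lt_irrefl 1)
      rw [← hwnorm]
      rcases eq_or_lt_of_le hnwR with h | h
      · exact Or.inl h.symm
      · rcases eq_or_lt_of_le hnw1 with h' | h'
        · exact Or.inr h'
        · exact absurd ⟨h, h'⟩ hnotin
    -- connectedness of the sphere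
    have hrank : 1 < Module.rank ℝ (EuclideanSpace ℂ (Fin n)) := by
      have h1 : Module.finrank ℝ (EuclideanSpace ℂ (Fin n)) = 2 * n := by
        rw [← Module.finrank_mul_finrank ℝ ℂ (EuclideanSpace ℂ (Fin n)),
          Complex.finrank_real_complex, finrank_euclideanSpace_fin]
      have h2 := Module.finrank_eq_rank ℝ (EuclideanSpace ℂ (Fin n))
      rw [← h2, h1]
      exact_mod_cast (by omega : 1 < 2 * n)
    have hconn : IsConnected (Metric.sphere (0 : EuclideanSpace ℂ (Fin n)) t0) :=
      isConnected_sphere hrank 0 ht0pos.le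
    set L : EuclideanSpace ℂ (Fin n) → ℝ := fun z => ‖Nm z‖ / ‖d z‖ with hL_def
    have hsphmem : ∀ z : EuclideanSpace ℂ (Fin n),
        z ∈ Metric.sphere (0 : EuclideanSpace ℂ (Fin n)) t0 ↔ ‖z‖ = t0 := by
      intro z; rw [mem_sphere_zero_iff_norm]
    have hLcont : ContinuousOn L (Metric.sphere (0 : EuclideanSpace ℂ (Fin n)) t0) := by
      apply ContinuousOn.div hNmcont.norm.continuousOn hdcont.norm.continuousOn
      intro z hz
      exact norm_ne_zero_iff.mpr (hA0 z (by rw [(hsphmem z).mp hz]; exact ht0r)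
        (by rw [(hsphmem z).mp hz]; exact ht01))
    have himg : IsConnected (L '' Metric.sphere (0 : EuclideanSpace ℂ (Fin n)) t0) :=
      hconn.image L hLcont
    obtain ⟨i0⟩ : Nonempty (Fin n) := ⟨⟨0, by omega⟩⟩
    have hz0 : ∃ z0 : EuclideanSpace ℂ (Fin n), ‖z0‖ = t0 := by
      refine ⟨((t0 : ℝ) : ℂ) • EuclideanSpace.single i0 (1 : ℂ), ?_⟩
      rw [norm_smul, EuclideanSpace.norm_single, norm_one, mul_one, Complex.norm_real,
        Real.norm_eq_abs, abs_of_pos ht0pos]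
    obtain ⟨z0, hz0⟩ := hz0
    refine ⟨L z0, hpt z0 hz0, ?_⟩
    intro z hz
    have hdz : d z ≠ 0 := hA0 z (by rw [hz]; exact ht0r) (by rw [hz]; exact ht01)
    have hLz : L z = L z0 := by
      by_contra hneq
      have hmemz : L z ∈ L '' Metric.sphere (0 : EuclideanSpace ℂ (Fin n)) t0 :=
        ⟨z, (hsphmem z).mpr hz, rfl⟩
      have hmemz0 : L z0 ∈ L '' Metric.sphere (0 : EuclideanSpace ℂ (Fin n)) t0 :=
        ⟨z0, (hsphmem z0).mpr hz0, rfl⟩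
      have hLz' : L z = ‖Nm z‖ / ‖d z‖ := rfl
      have hLz0' : L z0 = ‖Nm z0‖ / ‖d z0‖ := rfl
      have hRmem : R ∈ L '' Metric.sphere (0 : EuclideanSpace ℂ (Fin n)) t0 ∧
          (1 : ℝ) ∈ L '' Metric.sphere (0 : EuclideanSpace ℂ (Fin n)) t0 := by
        rcases hpt z hz with h1 | h1 <;> rcases hpt z0 hz0 with h2 | h2 <;>
          rw [← hLz'] at h1 <;> rw [← hLz0'] at h2
        · exact absurd (h1.trans h2.symm) hneq
        · exact ⟨h1 ▸ hmemz, h2 ▸ hmemz0⟩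
        · exact ⟨h2 ▸ hmemz0, h1 ▸ hmemz⟩
        · exact absurd (h1.trans h2.symm) hneq
      have hIcc := himg.isPreconnected.Icc_subset hRmem.1 hRmem.2
      have hmid : (R + 1) / 2 ∈ L '' Metric.sphere (0 : EuclideanSpace ℂ (Fin n)) t0 :=
        hIcc ⟨by linarith, by linarith⟩
      obtain ⟨zm, hzm, hzmL⟩ := hmid
      have hzm' : L zm = ‖Nm zm‖ / ‖d zm‖ := rfl
      rcases hpt zm ((hsphmem zm).mp hzm) with h | h <;> rw [← hzm'] at h <;>
        rw [hzmL] at h <;> linarith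
    have hdz' : ‖d z‖ ≠ 0 := norm_ne_zero_iff.mpr hdz
    rw [show (‖Nm z‖ : ℝ) = L z * ‖d z‖ from (div_mul_cancel₀ _ hdz').symm, hLz]
  obtain ⟨ρ1, hρ1mem, hρ1⟩ := hsphere 1 (Or.inr rfl)
  obtain ⟨ρr, hρrmem, hρr⟩ := hsphere r (Or.inl rfl)
  have hρ1pos : 0 < ρ1 := by rcases hρ1mem with h | h <;> simp [h, hR0]
  have hρrpos : 0 < ρr := by rcases hρrmem with h | h <;> simp [h, hR0]
  -- key identity (parallelogram averaging)
  have hpar : ∀ (ρ t0 : ℝ) (z : EuclideanSpace ℂ (Fin n)), ‖z‖ = t0 →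
      (∀ y : EuclideanSpace ℂ (Fin n), ‖y‖ = t0 → ‖Nm y‖ = ρ * ‖d y‖) →
      ‖v z‖ ^ 2 + ‖bE‖ ^ 2
        = ρ ^ 2 * (‖d z - e‖ ^ 2 + ‖e‖ ^ 2) := by
    intro ρ t0 z hz hρ
    have h1 : ‖v z + bE‖ = ρ * ‖d z‖ := hρ z hz
    have hneg : ‖(-z : EuclideanSpace ℂ (Fin n))‖ = t0 := by rw [norm_neg, hz]
    have hvneg : v (-z) = -v z := by rw [← neg_one_smul ℂ z, hvsmul, neg_one_smul]
    have hdneg : d (-z) = -(d z - e) + e := by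
      have h := hdsmul (-1) z
      rw [neg_one_smul] at h
      rw [h]; ring
    have h2 : ‖-v z + bE‖ = ρ * ‖-(d z - e) + e‖ := by
      have h := hρ (-z) hneg
      rw [show Nm (-z) = v (-z) + bE from rfl, hvneg, hdneg] at h
      exact h
    have e2 : ‖v z - bE‖ = ρ * ‖(d z - e) - e‖ := by
      calc ‖v z - bE‖ = ‖-v z + bE‖ := by rw [← norm_neg]; congr 1; abel
        _ = ρ * ‖-(d z - e) + e‖ := h2
        _ = ρ * ‖(d z - e) - e‖ := by rw [← norm_neg (-(d z - e) + e)]; congr 2; ring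
    have p1 := parallelogram_law_with_norm ℂ (v z) bE
    have p2 := parallelogram_law_with_norm ℂ (d z - e) e
    rw [sub_add_cancel] at p2
    have q1 : ‖v z + bE‖ * ‖v z + bE‖ = ρ ^ 2 * (‖d z‖ * ‖d z‖) := by rw [h1]; ring
    have q2 : ‖v z - bE‖ * ‖v z - bE‖
        = ρ ^ 2 * (‖(d z - e) - e‖ * ‖(d z - e) - e‖) := by rw [e2]; ring
    linear_combination (q1 + q2 - p1 + ρ ^ 2 * p2) / 2
  -- c must vanish
  have hc0 : c = 0 := by
    by_contra hc
    set cE : EuclideanSpace ℂ (Fin n) := WithLp.toLp 2 (fun j => c j) with hcE_def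
    have hcE : cE ≠ 0 := by
      intro h
      apply hc
      funext j
      exact congrArg (fun x : EuclideanSpace ℂ (Fin n) => x j) h
    have hsInner : ∀ z : EuclideanSpace ℂ (Fin n), d z - e = (inner ℂ cE z : ℂ) := by
      intro z
      simp only [hd_def, add_sub_cancel_right, PiLp.inner_apply, RCLike.inner_apply]
      exact Finset.sum_congr rfl fun i _ => rfl
    have hC : 0 < ‖cE‖ := norm_pos_iff.mpr hcE
    -- a unit vector orthogonal to c
    have hspan : Module.finrank ℂ (ℂ ∙ cE) = 1 := finrank_span_singleton hcE
    have horth := Submodule.finrank_add_finrank_orthogonal (K := (ℂ ∙ cE))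
    have hfinE : Module.finrank ℂ (EuclideanSpace ℂ (Fin n)) = n := finrank_euclideanSpace_fin
    have hpos : 0 < Module.finrank ℂ ((ℂ ∙ cE)ᗮ) := by omega
    obtain ⟨x, hx0⟩ := Module.finrank_pos_iff_exists_ne_zero.mp hpos
    have hv0 : (x : EuclideanSpace ℂ (Fin n)) ≠ 0 := by
      intro h
      exact hx0 (Subtype.ext h)
    have hv0c : (inner ℂ cE (x : EuclideanSpace ℂ (Fin n)) : ℂ) = 0 :=
      (Submodule.mem_orthogonal _ _).mp x.2 cE (Submodule.mem_span_singleton_self cE)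
    have hv0pos : 0 < ‖(x : EuclideanSpace ℂ (Fin n))‖ := norm_pos_iff.mpr hv0
    set z2 : EuclideanSpace ℂ (Fin n) :=
      ((‖(x : EuclideanSpace ℂ (Fin n))‖⁻¹ : ℝ) : ℂ) • (x : EuclideanSpace ℂ (Fin n))
      with hz2_def
    have hz2 : ‖z2‖ = 1 := by
      rw [hz2_def, norm_smul, Complex.norm_real, Real.norm_eq_abs,
        abs_of_pos (inv_pos.mpr hv0pos), inv_mul_cancel₀ hv0pos.ne']
    have hz2c : (inner ℂ cE z2 : ℂ) = 0 := by
      rw [hz2_def, inner_smul_right, hv0c, mul_zero]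
    have hdz2 : d z2 - e = 0 := by rw [hsInner]; exact hz2c
    -- the unit vector in direction c
    set z1 : EuclideanSpace ℂ (Fin n) := ((‖cE‖⁻¹ : ℝ) : ℂ) • cE with hz1_def
    have hz1 : ‖z1‖ = 1 := by
      rw [hz1_def, norm_smul, Complex.norm_real, Real.norm_eq_abs,
        abs_of_pos (inv_pos.mpr hC), inv_mul_cancel₀ hC.ne']
    have hdz1 : d z1 - e = ((‖cE‖ : ℝ) : ℂ) := by
      rw [hsInner, hz1_def, inner_smul_right, inner_self_eq_norm_sq_to_K]
      have hne : ((‖cE‖ : ℝ) : ℂ) ≠ 0 := by exact_mod_cast hC.ne'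
      push_cast
      field_simp
      ring
      rfl
    -- scaled versions
    have hscale : ∀ z : EuclideanSpace ℂ (Fin n), ‖z‖ = 1 →
        ‖(((r : ℝ) : ℂ)) • z‖ = r ∧ ‖v ((((r : ℝ) : ℂ)) • z)‖ = r * ‖v z‖ ∧
          d ((((r : ℝ) : ℂ)) • z) - e = ((r : ℝ) : ℂ) * (d z - e) := by
      intro z hz
      refine ⟨?_, ?_, ?_⟩
      · rw [norm_smul, Complex.norm_real, Real.norm_eq_abs, abs_of_pos hr0, hz, mul_one]
      · rw [hvsmul, norm_smul, Complex.norm_real, Real.norm_eq_abs, abs_of_pos hr0]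
      · rw [hdsmul]; ring
    obtain ⟨hs1a, hs1b, hs1c⟩ := hscale z1 hz1
    obtain ⟨hs2a, hs2b, hs2c⟩ := hscale z2 hz2
    -- the four equations
    have eq1 : ‖v z1‖ ^ 2 + ‖bE‖ ^ 2 = ρ1 ^ 2 * (‖cE‖ ^ 2 + ‖e‖ ^ 2) := by
      have h := hpar ρ1 1 z1 hz1 hρ1
      rwa [hdz1, Complex.norm_real, Real.norm_eq_abs, abs_of_pos hC] at h
    have eq2 : ‖v z2‖ ^ 2 + ‖bE‖ ^ 2 = ρ1 ^ 2 * (0 + ‖e‖ ^ 2) := by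
      have h := hpar ρ1 1 z2 hz2 hρ1
      rwa [hdz2, norm_zero, zero_pow two_ne_zero] at h
    have eq3 : (r * ‖v z1‖) ^ 2 + ‖bE‖ ^ 2 = ρr ^ 2 * ((r * ‖cE‖) ^ 2 + ‖e‖ ^ 2) := by
      have h := hpar ρr r ((((r : ℝ) : ℂ)) • z1) hs1a hρr
      rwa [hs1b, hs1c, hdz1, norm_mul, Complex.norm_real, Complex.norm_real,
        Real.norm_eq_abs, Real.norm_eq_abs, abs_of_pos hr0, abs_of_pos hC] at h
    have eq4 : (r * ‖v z2‖) ^ 2 + ‖bE‖ ^ 2 = ρr ^ 2 * (0 + ‖e‖ ^ 2) := by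
      have h := hpar ρr r ((((r : ℝ) : ℂ)) • z2) hs2a hρr
      rwa [hs2b, hs2c, hdz2, mul_zero, norm_zero, zero_pow two_ne_zero] at h
    -- deduce v z2 = 0
    have hkey : ρ1 ^ 2 * (r ^ 2 * ‖cE‖ ^ 2) = ρr ^ 2 * (r ^ 2 * ‖cE‖ ^ 2) := by
      linear_combination -(r ^ 2 * eq1) + r ^ 2 * eq2 + eq3 - eq4
    have h7 : ρ1 ^ 2 = ρr ^ 2 :=
      mul_right_cancel₀ (by positivity) hkey
    have h8 : ‖v z2‖ ^ 2 * (1 - r ^ 2) = 0 := by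
      linear_combination eq2 - eq4 + ‖e‖ ^ 2 * h7
    have h9 : ‖v z2‖ ^ 2 = 0 := by
      rcases mul_eq_zero.mp h8 with h | h
      · exact h
      · nlinarith
    have hvz2 : v z2 = 0 := by
      rw [← norm_eq_zero]
      exact pow_eq_zero_iff two_ne_zero |>.mp h9
    -- now f is constant on the ray through z2
    have ht1 : (r + 1) / 2 ∈ Set.Ioo r 1 := ⟨by linarith, by linarith⟩
    have hu_ann : ∀ t ∈ Set.Ioo r 1, (((t / ‖z2‖ : ℝ) : ℂ)) • z2 ∈ ann n r := by
      intro t ht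
      have h1 : ‖(((t / ‖z2‖ : ℝ) : ℂ)) • z2‖ = t :=
        hunorm z2 t (lt_trans hr0 ht.1) (by rw [hz2]; norm_num)
      exact ⟨by rw [h1]; exact ht.1, by rw [h1]; exact ht.2⟩
    have hdu : ∀ t : ℝ, d ((((t / ‖z2‖ : ℝ) : ℂ)) • z2) = e := by
      intro t
      rw [hdsmul, show d z2 - e = 0 from hdz2, mul_zero, zero_add]
    have he : e ≠ 0 := by
      intro he0
      exact hden _ (hu_ann _ ht1) (by
        rw [show (∑ i, (((((r + 1) / 2 / ‖z2‖ : ℝ) : ℂ)) • z2) i * (starRingEnd ℂ) (c i))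
          + e = d ((((((r + 1) / 2 / ‖z2‖ : ℝ) : ℂ)) • z2)) from rfl, hdu, he0])
    set w : EuclideanSpace ℂ (Fin n) := (e⁻¹ : ℂ) • bE with hw_def
    have hconst : ∀ t : ℝ, t ∈ Set.Ioo r 1 → f ((((t / ‖z2‖ : ℝ) : ℂ)) • z2) = w := by
      intro t ht
      rw [hfval _ (hu_ann t ht), hdu]
      congr 1
      show v _ + bE = bE
      rw [hvsmul, hvz2, smul_zero, zero_add]
    have hwann : w ∈ ann n R := by
      have := hmaps (hu_ann _ ht1)
      rwa [hconst _ ht1] at this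
    exact hray z2 w (Or.inr hz2) hwann hconst
  -- now d is the constant e
  have hdc : ∀ z : EuclideanSpace ℂ (Fin n), d z = e := by
    intro z
    simp [hd_def, hc0]
  obtain ⟨i0⟩ : Nonempty (Fin n) := ⟨⟨0, by omega⟩⟩
  have hz0ex : ∃ z0 : EuclideanSpace ℂ (Fin n), ‖z0‖ = 1 :=
    ⟨EuclideanSpace.single i0 (1 : ℂ), by rw [EuclideanSpace.norm_single, norm_one]⟩
  obtain ⟨z0, hz0n⟩ := hz0ex
  have hden' : ∀ z ∈ ann n r, d z ≠ 0 := hden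
  have he0 : e ≠ 0 := by
    intro he
    have hzpt : ((((r + 1) / 2 : ℝ) : ℂ)) • z0 ∈ ann n r := by
      have h1 : ‖((((r + 1) / 2 : ℝ) : ℂ)) • z0‖ = (r + 1) / 2 := by
        rw [norm_smul, Complex.norm_real, Real.norm_eq_abs, abs_of_pos (by linarith), hz0n,
          mul_one]
      exact ⟨by rw [h1]; linarith, by rw [h1]; linarith⟩
    exact hden' _ hzpt (by rw [hdc, he])
  have henorm : 0 < ‖e‖ := norm_pos_iff.mpr he0
  have hv00 : v 0 = 0 := by
    have h := hvsmul 0 0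
    rwa [zero_smul, zero_smul] at h
  -- inner products ⟪v z, b⟫ = 0
  have hkeyre : ∀ z : EuclideanSpace ℂ (Fin n), ‖z‖ = 1 →
      (inner ℂ (v z) bE : ℂ).re = 0 := by
    intro z hz
    have h1 : ‖v z + bE‖ = ρ1 * ‖e‖ := by
      have h := hρ1 z hz
      rwa [show Nm z = v z + bE from rfl, hdc] at h
    have h2 : ‖v z - bE‖ = ρ1 * ‖e‖ := by
      have hneg : ‖(-z : EuclideanSpace ℂ (Fin n))‖ = 1 := by rw [norm_neg, hz]
      have h := hρ1 (-z) hneg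
      have hvneg : v (-z) = -v z := by rw [← neg_one_smul ℂ z, hvsmul, neg_one_smul]
      rw [show Nm (-z) = v (-z) + bE from rfl, hvneg, hdc] at h
      calc ‖v z - bE‖ = ‖-v z + bE‖ := by rw [← norm_neg]; congr 1; abel
        _ = ρ1 * ‖e‖ := h
    have a1 := norm_add_sq (𝕜 := ℂ) (v z) bE
    have a2 := norm_sub_sq (𝕜 := ℂ) (v z) bE
    have hsq : ‖v z + bE‖ ^ 2 = ‖v z - bE‖ ^ 2 := by rw [h1, h2]
    have : RCLike.re (inner ℂ (v z) bE : ℂ) = 0 := by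
      rw [a1, a2] at hsq
      linarith
    exact this
  have hinner : ∀ z : EuclideanSpace ℂ (Fin n), (inner ℂ (v z) bE : ℂ) = 0 := by
    intro z
    by_cases hz0 : z = 0
    · rw [hz0, hv00, inner_zero_left]
    · have hzpos : 0 < ‖z‖ := norm_pos_iff.mpr hz0
      set zu : EuclideanSpace ℂ (Fin n) := ((‖z‖⁻¹ : ℝ) : ℂ) • z with hzu_def
      have hzu : ‖zu‖ = 1 := by
        rw [hzu_def, norm_smul, Complex.norm_real, Real.norm_eq_abs,
          abs_of_pos (inv_pos.mpr hzpos), inv_mul_cancel₀ hzpos.ne']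
      have hIzu : ‖(Complex.I • zu : EuclideanSpace ℂ (Fin n))‖ = 1 := by
        rw [norm_smul, Complex.norm_I, one_mul, hzu]
      have hre := hkeyre zu hzu
      have him0 := hkeyre _ hIzu
      have hvI : v (Complex.I • zu) = Complex.I • v zu := hvsmul _ _
      rw [hvI, inner_smul_left, Complex.conj_I] at him0
      have him : (inner ℂ (v zu) bE : ℂ).im = 0 := by
        have : (-Complex.I * (inner ℂ (v zu) bE : ℂ)).re = (inner ℂ (v zu) bE : ℂ).im := by
          simp [Complex.mul_re]
        rw [this] at him0
        exact him0
      have hzero : (inner ℂ (v zu) bE : ℂ) = 0 := Complex.ext hre him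
      have hvzu : v zu = ((‖z‖⁻¹ : ℝ) : ℂ) • v z := hvsmul _ _
      rw [hvzu, inner_smul_left, Complex.conj_ofReal] at hzero
      rcases mul_eq_zero.mp hzero with h | h
      · exact absurd h (by exact_mod_cast inv_ne_zero hzpos.ne')
      · exact h
  -- constant modulus of the linear part
  set m : ℝ := Real.sqrt (ρ1 ^ 2 * ‖e‖ ^ 2 - ‖bE‖ ^ 2) with hm_def
  have hm2 : ∀ z : EuclideanSpace ℂ (Fin n), ‖z‖ = 1 →
      ‖v z‖ ^ 2 = ρ1 ^ 2 * ‖e‖ ^ 2 - ‖bE‖ ^ 2 := by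
    intro z hz
    have h := hpar ρ1 1 z hz hρ1
    rw [hdc, sub_self, norm_zero] at h
    nlinarith [h]
  have hmsq : m ^ 2 = ρ1 ^ 2 * ‖e‖ ^ 2 - ‖bE‖ ^ 2 := by
    rw [hm_def, Real.sq_sqrt]
    rw [← hm2 z0 hz0n]
    positivity
  have hmnn : 0 ≤ m := Real.sqrt_nonneg _
  have hm : ∀ z : EuclideanSpace ℂ (Fin n), ‖v z‖ = m * ‖z‖ := by
    intro z
    by_cases hz0 : z = 0
    · simp [hz0, hv00]
    · have hzpos : 0 < ‖z‖ := norm_pos_iff.mpr hz0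
      set zu : EuclideanSpace ℂ (Fin n) := ((‖z‖⁻¹ : ℝ) : ℂ) • z with hzu_def
      have hzu : ‖zu‖ = 1 := by
        rw [hzu_def, norm_smul, Complex.norm_real, Real.norm_eq_abs,
          abs_of_pos (inv_pos.mpr hzpos), inv_mul_cancel₀ hzpos.ne']
      have h1 : ‖v zu‖ = m := by
        rw [← Real.sqrt_sq (norm_nonneg (v zu)), hm2 zu hzu, hm_def]
      have hvzu : v zu = ((‖z‖⁻¹ : ℝ) : ℂ) • v z := hvsmul _ _
      rw [hvzu, norm_smul, Complex.norm_real, Real.norm_eq_abs,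
        abs_of_pos (inv_pos.mpr hzpos)] at h1
      field_simp at h1
      linarith [h1]
  have hmpos : 0 < m := by
    rcases eq_or_lt_of_le hmnn with h | h
    · exfalso
      have hfc : ∀ z ∈ ann n r, f z = (e⁻¹ : ℂ) • bE := by
        intro z hz
        rw [hfval z hz, hdc]
        congr 1
        show v z + bE = bE
        have : ‖v z‖ = 0 := by rw [hm z, ← h, zero_mul]
        rw [norm_eq_zero.mp this, zero_add]
      obtain ⟨z, hz, w', hw', hne⟩ := hnonconst
      exact hne ((hfc z hz).trans (hfc w' hw').symm)
    · exact h
  -- b must vanish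
  have hb0 : bE = 0 := by
    have hinj : Function.Injective T := by
      intro x y hxy
      have h0 : T (x - y) = 0 := by rw [map_sub, hxy, sub_self]
      have h1 : ‖v (x - y)‖ = m * ‖x - y‖ := hm _
      rw [show v (x - y) = T (x - y) from rfl, h0, norm_zero] at h1
      have : ‖x - y‖ = 0 := by
        rcases mul_eq_zero.mp h1.symm with h | h
        · exact absurd h hmpos.ne'
        · exact h
      rw [← sub_eq_zero]
      exact norm_eq_zero.mp this
    have hsurj := LinearMap.surjective_of_injective hinj
    obtain ⟨x, hx⟩ := hsurj bE
    have h := hinner x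
    rw [show v x = T x from rfl, hx] at h
    exact inner_self_eq_zero.mp h
  -- determine the constants
  have hm_e : m = ρ1 * ‖e‖ := by
    have h := hρ1 z0 hz0n
    rw [show Nm z0 = v z0 + bE from rfl, hb0, add_zero, hdc, hm z0, hz0n, mul_one] at h
    exact h
  have hre : m * r = ρr * ‖e‖ := by
    have hrn : ‖(((r : ℝ) : ℂ)) • z0‖ = r := by
      rw [norm_smul, Complex.norm_real, Real.norm_eq_abs, abs_of_pos hr0, hz0n, mul_one]
    have h := hρr _ hrn
    rw [show Nm ((((r : ℝ) : ℂ)) • z0) = v ((((r : ℝ) : ℂ)) • z0) + bE from rfl, hb0,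
      add_zero, hdc, hm, hrn] at h
    exact h
  have hρr_eq : ρr = ρ1 * r := by
    apply mul_right_cancel₀ henorm.ne'
    calc ρr * ‖e‖ = m * r := hre.symm
      _ = ρ1 * ‖e‖ * r := by rw [hm_e]
      _ = ρ1 * r * ‖e‖ := by ring
  have hρ11 : ρ1 = 1 := by
    rcases hρ1mem with h | h
    · exfalso
      have hlt : R * r < R := mul_lt_of_lt_one_right hR0 hr1
      rcases hρrmem with h' | h'
      · rw [h, h'] at hρr_eq
        linarith
      · rw [h, h'] at hρr_eq
        linarith
    · exact h
  have hrR : r = R := by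
    rw [hρ11, one_mul] at hρr_eq
    rcases hρrmem with h' | h'
    · rw [h'] at hρr_eq; exact hρr_eq.symm
    · exfalso; rw [h'] at hρr_eq; exact absurd hρr_eq.symm hr1.ne
  have hme : m = ‖e‖ := by rw [hm_e, hρ11, one_mul]
  -- construct the unitary
  refine ⟨hrR, ?_⟩
  set Li : EuclideanSpace ℂ (Fin n) →ₗᵢ[ℂ] EuclideanSpace ℂ (Fin n) :=
    { toLinearMap := (e⁻¹ : ℂ) • T
      norm_map' := by
        intro z
        show ‖(e⁻¹ : ℂ) • v z‖ = ‖z‖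
        rw [norm_smul, norm_inv, hm z, hme, ← mul_assoc,
          inv_mul_cancel₀ henorm.ne', one_mul] } with hLi_def
  refine ⟨Li.toLinearIsometryEquiv rfl, ?_⟩
  intro z hz
  rw [hfval z hz, hdc]
  rw [show Nm z = v z + bE from rfl, hb0, add_zero]
  rw [LinearIsometry.toLinearIsometryEquiv_apply]
  rfl
end
end

section
/- Let n ≥ 1, let s₁ and s₂ be nonzero real numbers with s₁·s₂ > 0, and let Q be a nonzero polynomial in ℝ[x₁,…,xₙ]. Then the polynomial Q · (x₁+⋯+xₙ+s₁) · (x₁+⋯+xₙ+s₂) has at least (n+2 choose 2) monomials with nonzero coefficient; that is, its support has cardinality at least (n+2 choose 2). -/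
open scoped BigOperators
open Polynomial

namespace DiagRank

noncomputable section

abbrev A (n : ℕ) := MvPolynomial (Fin n) ℝ

def LL (n : ℕ) : A n := ∑ i : Fin n, MvPolynomial.X i

/-- total weight of a polynomial over a multivariate polynomial ring -/
def wt {n : ℕ} (P : Polynomial (A n)) : ℕ := ∑ j ∈ P.support, (P.coeff j).support.card

lemma LL_ne_zero {n : ℕ} (hn : 1 ≤ n) : LL n ≠ 0 := by
  intro h
  have := congrArg (MvPolynomial.eval (fun _ : Fin n => (1:ℝ))) h
  rw [LL, map_sum] at this
  simp only [MvPolynomial.eval_X, map_zero] at this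
  rw [Finset.sum_const, Finset.card_univ, Fintype.card_fin, nsmul_eq_mul, mul_one] at this
  exact absurd (Nat.cast_eq_zero.mp this) (by omega)

lemma card_support_eq_wt {n : ℕ} (g : A (n+1)) :
    g.support.card = wt (MvPolynomial.finSuccEquiv ℝ n g) := by
  classical
  rw [wt, Finset.card_eq_sum_card_fiberwise
      (f := fun m : Fin (n+1) →₀ ℕ => m 0)
      (t := (MvPolynomial.finSuccEquiv ℝ n g).support)
      (fun m hm => by
        rw [MvPolynomial.support_finSuccEquiv]
        exact Finset.mem_image_of_mem _ hm)]
  apply Finset.sum_congr rfl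
  intro i _
  have h1 : {m ∈ g.support | m 0 = i} =
      (((MvPolynomial.finSuccEquiv ℝ n g).coeff i).support.image (Finsupp.cons i)) :=
    (MvPolynomial.image_support_finSuccEquiv).symm
  rw [Finset.filter_congr (fun m _ => Iff.rfl), h1,
    Finset.card_image_of_injective _ (Finsupp.cons_right_injective i)]

lemma wt_pos {n : ℕ} {P : Polynomial (A n)} (h : P ≠ 0) : 1 ≤ wt P := by
  obtain ⟨j, hj⟩ := Finset.nonempty_iff_ne_empty.mpr
    (fun he => h (Polynomial.support_eq_empty.mp he))
  have h1 : 1 ≤ (P.coeff j).support.card :=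
    Finset.card_pos.mpr (MvPolynomial.support_nonempty.mpr (Polynomial.mem_support_iff.mp hj))
  exact le_trans h1 (Finset.single_le_sum (f := fun j => (P.coeff j).support.card)
    (fun _ _ => Nat.zero_le _) hj)

lemma wt_divX_add {n : ℕ} (P : Polynomial (A n)) :
    wt P = (P.coeff 0).support.card + wt P.divX := by
  classical
  have hbij : wt P.divX = ∑ j ∈ P.support.erase 0, (P.coeff j).support.card := by
    rw [wt]
    apply Finset.sum_nbij' (fun i => i + 1) (fun j => j - 1)
    · intro i hi
      rw [Polynomial.mem_support_iff, Polynomial.coeff_divX] at hi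
      rw [Finset.mem_erase, Polynomial.mem_support_iff]
      exact ⟨Nat.succ_ne_zero i, hi⟩
    · intro j hj
      rw [Finset.mem_erase, Polynomial.mem_support_iff] at hj
      rw [Polynomial.mem_support_iff, Polynomial.coeff_divX]
      have h : j - 1 + 1 = j := by omega
      rw [h]
      exact hj.2
    · intro i _; omega
    · intro j hj
      rw [Finset.mem_erase] at hj
      omega
    · intro i hi
      rw [Polynomial.coeff_divX]
  by_cases h0 : (0:ℕ) ∈ P.support
  · rw [wt, ← Finset.add_sum_erase _ _ h0, hbij]
  · rw [Polynomial.notMem_support_iff] at h0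
    rw [wt, hbij, h0]
    simp only [MvPolynomial.support_zero, Finset.card_empty, zero_add]
    apply (Finset.sum_erase _ _).symm
    rw [h0]
    simp

lemma divX_X_mul {n : ℕ} (P : Polynomial (A n)) : (Polynomial.X * P).divX = P := by
  ext i
  rw [Polynomial.coeff_divX, Polynomial.coeff_X_mul]

lemma wt_X_mul {n : ℕ} (P : Polynomial (A n)) : wt (Polynomial.X * P) = wt P := by
  rw [wt_divX_add, Polynomial.mul_coeff_zero, Polynomial.coeff_X_zero, zero_mul, divX_X_mul]
  simp [MvPolynomial.support_zero]

lemma coeff_derivative_support {n : ℕ} (P : Polynomial (A n)) (j : ℕ) :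
    ((Polynomial.derivative P).coeff j).support = (P.coeff (j+1)).support := by
  classical
  rw [Polynomial.coeff_derivative]
  have hcast : ((j : A n) + 1) = MvPolynomial.C ((j:ℝ) + 1) := by
    rw [← map_natCast (MvPolynomial.C (σ := Fin n) (R := ℝ)) j,
      ← map_one (MvPolynomial.C (σ := Fin n) (R := ℝ)), ← map_add]
  rw [hcast, mul_comm]
  ext m
  rw [MvPolynomial.mem_support_iff, MvPolynomial.mem_support_iff,
    MvPolynomial.coeff_C_mul]
  have hne : ((j:ℝ)+1) ≠ 0 := by positivity
  simp [hne]

lemma wt_derivative {n : ℕ} (P : Polynomial (A n)) :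
    wt (Polynomial.derivative P) = wt P.divX := by
  classical
  have hsupp : (Polynomial.derivative P).support = P.divX.support := by
    ext j
    rw [Polynomial.mem_support_iff, Polynomial.mem_support_iff, Polynomial.coeff_divX,
      ← MvPolynomial.support_nonempty, ← MvPolynomial.support_nonempty,
      coeff_derivative_support]
  rw [wt, wt, hsupp]
  apply Finset.sum_congr rfl
  intro j _
  rw [coeff_derivative_support, Polynomial.coeff_divX]

lemma cast_succ_eq_C (n j : ℕ) : ((j : A n) + 1) = MvPolynomial.C ((j:ℝ)+1) := by
  rw [← map_natCast (MvPolynomial.C (σ := Fin n) (R := ℝ)) j,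
    ← map_one (MvPolynomial.C (σ := Fin n) (R := ℝ)), ← map_add]

lemma cast_succ_ne (n j : ℕ) : ((j : A n) + 1) ≠ 0 := by
  rw [cast_succ_eq_C, Ne, MvPolynomial.C_eq_zero]
  positivity

def H1Stmt (n : ℕ) : Prop := ∀ g : A n, g ≠ 0 → LL n ∣ g → n ≤ g.support.card

def SQStmt (n : ℕ) : Prop :=
  ∀ g : A n, g ≠ 0 → (LL n)^2 ∣ g → (n+1).choose 2 ≤ g.support.card

lemma finSuccEquiv_LL (n : ℕ) :
    MvPolynomial.finSuccEquiv ℝ n (LL (n+1)) = Polynomial.X + Polynomial.C (LL n) := by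
  rw [LL, Fin.sum_univ_succ, map_add, MvPolynomial.finSuccEquiv_X_zero, map_sum]
  congr 1
  rw [LL, map_sum]
  apply Finset.sum_congr rfl
  intro i _
  rw [MvPolynomial.finSuccEquiv_X_succ]

lemma SH1_core (n : ℕ) (hn : 1 ≤ n) (ih : H1Stmt n) (P : Polynomial (A n)) (hP : P ≠ 0)
    (heval : Polynomial.eval (-(LL n)) P = 0) (hc0 : P.coeff 0 ≠ 0) : n + 1 ≤ wt P := by
  obtain ⟨W, hW⟩ := (Polynomial.dvd_iff_isRoot.mpr heval)
  have hXc : (Polynomial.X - Polynomial.C (-(LL n))).coeff 0 = LL n := by simp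
  have hc0' : P.coeff 0 = LL n * W.coeff 0 := by
    rw [hW, Polynomial.mul_coeff_zero, hXc]
  have h1 : n ≤ (P.coeff 0).support.card := ih _ hc0 ⟨W.coeff 0, hc0'⟩
  have hdivX : P.divX ≠ 0 := by
    intro h
    have h2 := Polynomial.divX_eq_zero_iff.mp h
    rw [h2, Polynomial.eval_C] at heval
    exact hc0 heval
  have h3 := wt_pos hdivX
  rw [wt_divX_add P]
  omega

lemma SH1 (n : ℕ) (hn : 1 ≤ n) (ih : H1Stmt n) :
    ∀ N (P : Polynomial (A n)), P.natDegree ≤ N → P ≠ 0 →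
      Polynomial.eval (-(LL n)) P = 0 → n + 1 ≤ wt P := by
  have hLne := LL_ne_zero hn
  intro N
  induction N with
  | zero =>
    intro P hdeg hP heval
    by_cases hc0 : P.coeff 0 = 0
    · exfalso
      have hP1 : P = Polynomial.X * P.divX := by
        conv_lhs => rw [← Polynomial.X_mul_divX_add P]
        rw [hc0, map_zero, add_zero]
      have hd1 : P.divX ≠ 0 := fun h => hP (by rw [hP1, h, mul_zero])
      have h2 := Polynomial.natDegree_mul (Polynomial.X_ne_zero (R := A n)) hd1
      rw [← hP1, Polynomial.natDegree_X] at h2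
      omega
    · exact SH1_core n hn ih P hP heval hc0
  | succ N ihN =>
    intro P hdeg hP heval
    by_cases hc0 : P.coeff 0 = 0
    · have hP1 : P = Polynomial.X * P.divX := by
        conv_lhs => rw [← Polynomial.X_mul_divX_add P]
        rw [hc0, map_zero, add_zero]
      have hd1 : P.divX ≠ 0 := fun h => hP (by rw [hP1, h, mul_zero])
      have hdeg1 : P.divX.natDegree ≤ N := by
        have h2 := Polynomial.natDegree_mul (Polynomial.X_ne_zero (R := A n)) hd1
        rw [← hP1, Polynomial.natDegree_X] at h2
        omega
      have heval1 : Polynomial.eval (-(LL n)) P.divX = 0 := by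
        rw [hP1, Polynomial.eval_mul, Polynomial.eval_X] at heval
        rcases mul_eq_zero.mp heval with h | h
        · exact absurd h (neg_ne_zero.mpr hLne)
        · exact h
      have h3 := ihN P.divX hdeg1 hd1 heval1
      rw [hP1, wt_X_mul]
      exact h3
    · exact SH1_core n hn ih P hP heval hc0

theorem H1 : ∀ n, H1Stmt n := by
  intro n
  induction n with
  | zero => intro g hg hdvd; exact Nat.zero_le _
  | succ n ih =>
    intro g hg hdvd
    rcases Nat.eq_zero_or_pos n with rfl | hn
    · simpa using (MvPolynomial.support_nonempty.mpr hg).card_pos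
    · set P := MvPolynomial.finSuccEquiv ℝ n g with hP
      have hPne : P ≠ 0 := by
        rw [hP, Ne, EmbeddingLike.map_eq_zero_iff]
        exact hg
      have heval : Polynomial.eval (-(LL n)) P = 0 := by
        have hdvd' : (Polynomial.X - Polynomial.C (-(LL n))) ∣ P := by
          rw [map_neg, sub_neg_eq_add]
          obtain ⟨R, hR⟩ := hdvd
          exact ⟨MvPolynomial.finSuccEquiv ℝ n R, by rw [hP, hR, map_mul, finSuccEquiv_LL]⟩
        exact Polynomial.dvd_iff_isRoot.mp hdvd'
      rw [card_support_eq_wt g]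
      exact SH1 n hn ih P.natDegree P le_rfl hPne heval

lemma SH2_core (n : ℕ) (hn : 1 ≤ n) (ih1 : H1Stmt n) (ihsq : SQStmt n)
    (P : Polynomial (A n)) (hP : P ≠ 0)
    (heval : Polynomial.eval (-(LL n)) P = 0)
    (heval' : Polynomial.eval (-(LL n)) (Polynomial.derivative P) = 0)
    (hc0 : P.coeff 0 ≠ 0) : (n+2).choose 2 ≤ wt P := by
  have hLne := LL_ne_zero hn
  set R := P.divX with hRdef
  have hP1 : Polynomial.X * R + Polynomial.C (P.coeff 0) = P := Polynomial.X_mul_divX_add P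
  have hder : Polynomial.derivative P = R + Polynomial.X * Polynomial.derivative R := by
    conv_lhs => rw [← hP1]
    rw [Polynomial.derivative_add, Polynomial.derivative_C, add_zero,
      Polynomial.derivative_mul, Polynomial.derivative_X, one_mul]
  have hRe : Polynomial.eval (-(LL n)) R
      = LL n * Polynomial.eval (-(LL n)) (Polynomial.derivative R) := by
    have h := heval'
    rw [hder, Polynomial.eval_add, Polynomial.eval_mul, Polynomial.eval_X] at h
    have h2 := eq_neg_of_add_eq_zero_left h
    rw [h2, neg_mul, neg_neg]
  have hc0eq : P.coeff 0
      = LL n * (LL n * Polynomial.eval (-(LL n)) (Polynomial.derivative R)) := by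
    have h := heval
    rw [← hP1, Polynomial.eval_add, Polynomial.eval_mul, Polynomial.eval_X,
      Polynomial.eval_C] at h
    have h2 := eq_neg_of_add_eq_zero_right h
    rw [h2, neg_mul, neg_neg, hRe]
  have hsq : (LL n)^2 ∣ P.coeff 0 :=
    ⟨Polynomial.eval (-(LL n)) (Polynomial.derivative R), by rw [hc0eq]; ring⟩
  have h1 : (n+1).choose 2 ≤ (P.coeff 0).support.card := ihsq _ hc0 hsq
  have hDne : Polynomial.derivative P ≠ 0 := by
    intro h
    have hR0 : R = 0 := by
      ext j : 1
      have hcd := Polynomial.coeff_derivative P j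
      rw [h, Polynomial.coeff_zero] at hcd
      have h3 : P.coeff (j+1) = 0 := by
        rcases mul_eq_zero.mp hcd.symm with h' | h'
        · exact h'
        · exact absurd h' (by push_cast; exact cast_succ_ne n j)
      rw [hRdef, Polynomial.coeff_divX, h3, Polynomial.coeff_zero]
    rw [← hP1, hR0, mul_zero, zero_add, Polynomial.eval_C] at heval
    exact hc0 heval
  have h2 : n + 1 ≤ wt (Polynomial.derivative P) :=
    SH1 n hn ih1 _ _ le_rfl hDne heval'
  rw [wt_derivative] at h2
  rw [wt_divX_add P]
  have hch : (n+2).choose 2 = (n+1) + (n+1).choose 2 := by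
    rw [Nat.choose_succ_succ, Nat.choose_one_right]
  omega

lemma SH2 (n : ℕ) (hn : 1 ≤ n) (ih1 : H1Stmt n) (ihsq : SQStmt n) :
    ∀ N (P : Polynomial (A n)), P.natDegree ≤ N → P ≠ 0 →
      Polynomial.eval (-(LL n)) P = 0 →
      Polynomial.eval (-(LL n)) (Polynomial.derivative P) = 0 →
      (n+2).choose 2 ≤ wt P := by
  have hLne := LL_ne_zero hn
  intro N
  induction N with
  | zero =>
    intro P hdeg hP heval heval'
    by_cases hc0 : P.coeff 0 = 0
    · exfalso
      have hP1 : P = Polynomial.X * P.divX := by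
        conv_lhs => rw [← Polynomial.X_mul_divX_add P]
        rw [hc0, map_zero, add_zero]
      have hd1 : P.divX ≠ 0 := fun h => hP (by rw [hP1, h, mul_zero])
      have h2 := Polynomial.natDegree_mul (Polynomial.X_ne_zero (R := A n)) hd1
      rw [← hP1, Polynomial.natDegree_X] at h2
      omega
    · exact SH2_core n hn ih1 ihsq P hP heval heval' hc0
  | succ N ihN =>
    intro P hdeg hP heval heval'
    by_cases hc0 : P.coeff 0 = 0
    · have hP1 : P = Polynomial.X * P.divX := by
        conv_lhs => rw [← Polynomial.X_mul_divX_add P]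
        rw [hc0, map_zero, add_zero]
      have hd1 : P.divX ≠ 0 := fun h => hP (by rw [hP1, h, mul_zero])
      have hdeg1 : P.divX.natDegree ≤ N := by
        have h2 := Polynomial.natDegree_mul (Polynomial.X_ne_zero (R := A n)) hd1
        rw [← hP1, Polynomial.natDegree_X] at h2
        omega
      have heval1 : Polynomial.eval (-(LL n)) P.divX = 0 := by
        rw [hP1, Polynomial.eval_mul, Polynomial.eval_X] at heval
        rcases mul_eq_zero.mp heval with h | h
        · exact absurd h (neg_ne_zero.mpr hLne)
        · exact h
      have heval1' : Polynomial.eval (-(LL n)) (Polynomial.derivative P.divX) = 0 := by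
        have hd : Polynomial.derivative P
            = P.divX + Polynomial.X * Polynomial.derivative P.divX := by
          conv_lhs => rw [hP1]
          rw [Polynomial.derivative_mul, Polynomial.derivative_X, one_mul]
        rw [hd, Polynomial.eval_add, Polynomial.eval_mul, Polynomial.eval_X, heval1,
          zero_add] at heval'
        rcases mul_eq_zero.mp heval' with h | h
        · exact absurd h (neg_ne_zero.mpr hLne)
        · exact h
      have h3 := ihN P.divX hdeg1 hd1 heval1 heval1'
      rw [hP1, wt_X_mul]
      exact h3
    · exact SH2_core n hn ih1 ihsq P hP heval heval' hc0

theorem SQ : ∀ n, SQStmt n := by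
  intro n
  induction n with
  | zero => intro g hg h; simp
  | succ n ih =>
    intro g hg hdvd
    rcases Nat.eq_zero_or_pos n with rfl | hn
    · simpa using (MvPolynomial.support_nonempty.mpr hg).card_pos
    · set P := MvPolynomial.finSuccEquiv ℝ n g with hP
      have hPne : P ≠ 0 := by
        rw [hP, Ne, EmbeddingLike.map_eq_zero_iff]
        exact hg
      obtain ⟨R, hR⟩ := hdvd
      have hW : P = (Polynomial.X - Polynomial.C (-(LL n)))^2
          * MvPolynomial.finSuccEquiv ℝ n R := by
        rw [map_neg, sub_neg_eq_add, hP, hR, map_mul, map_pow, finSuccEquiv_LL]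
      have heval : Polynomial.eval (-(LL n)) P = 0 := by
        rw [hW]
        simp
      have heval' : Polynomial.eval (-(LL n)) (Polynomial.derivative P) = 0 := by
        rw [hW, Polynomial.derivative_mul, Polynomial.derivative_pow]
        simp
      rw [card_support_eq_wt g]
      exact SH2 n hn (H1 n) ih P.natDegree P le_rfl hPne heval heval'

/-! ### the complete homogeneous sums `hh` -/

def hh (s1 s2 : ℝ) (j : ℕ) : ℝ := ∑ a ∈ Finset.range (j+1), s1^a * s2^(j-a)

lemma hh_zero (s1 s2 : ℝ) : hh s1 s2 0 = 1 := by simp [hh]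

lemma hh_one (s1 s2 : ℝ) : hh s1 s2 1 = s1 + s2 := by
  rw [hh]
  rw [Finset.sum_range_succ, Finset.sum_range_one]
  norm_num
  ring

lemma hh_peel (s1 s2 : ℝ) (j : ℕ) :
    hh s1 s2 (j+1) = s1 * hh s1 s2 j + s2^(j+1) := by
  rw [hh, Finset.sum_range_succ']
  simp only [pow_zero, one_mul, Nat.sub_zero]
  rw [hh, Finset.mul_sum]
  congr 1
  apply Finset.sum_congr rfl
  intro a ha
  rw [Finset.mem_range] at ha
  have h : j + 1 - (a+1) = j - a := by omega
  rw [h, pow_succ]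
  ring

lemma hh_rec (s1 s2 : ℝ) (j : ℕ) :
    hh s1 s2 (j+2) = (s1+s2) * hh s1 s2 (j+1) - (s1*s2) * hh s1 s2 j := by
  have h1 := hh_peel s1 s2 j
  have h2 := hh_peel s1 s2 (j+1)
  rw [h2, h1]
  ring

lemma hh_ne (s1 s2 : ℝ) (hs : 0 < s1*s2) (j : ℕ) : hh s1 s2 j ≠ 0 := by
  rcases mul_pos_iff.mp hs with ⟨h1, h2⟩ | ⟨h1, h2⟩
  · have hpos : 0 < hh s1 s2 j :=
      Finset.sum_pos (fun a _ => by positivity) ⟨0, Finset.mem_range.mpr (by omega)⟩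
    exact hpos.ne'
  · have hT : 0 < ∑ a ∈ Finset.range (j+1), (-s1)^a * (-s2)^(j-a) :=
      Finset.sum_pos (fun a _ => by
        have hn1 : 0 < -s1 := neg_pos.mpr h1
        have hn2 : 0 < -s2 := neg_pos.mpr h2
        positivity) ⟨0, Finset.mem_range.mpr (by omega)⟩
    have hTeq : ∑ a ∈ Finset.range (j+1), (-s1)^a * (-s2)^(j-a)
        = (-1)^j * hh s1 s2 j := by
      rw [hh, Finset.mul_sum]
      apply Finset.sum_congr rfl
      intro a ha
      rw [Finset.mem_range] at ha
      have haj : a + (j - a) = j := by omega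
      calc (-s1)^a * (-s2)^(j-a)
          = ((-1:ℝ)^a * (-1:ℝ)^(j-a)) * (s1^a * s2^(j-a)) := by
            rw [neg_pow, neg_pow]; ring
        _ = (-1:ℝ)^j * (s1^a * s2^(j-a)) := by rw [← pow_add, haj]
    intro h0
    rw [hTeq, h0, mul_zero] at hT
    exact lt_irrefl _ hT

/-! ### homogeneous slices -/

def Qc (n : ℕ) (Q : A n) (d : ℕ) : A n := MvPolynomial.homogeneousComponent d Q

def Qa (n : ℕ) (Q : A n) : ℕ → A n
  | 0 => 0
  | 1 => 0
  | (d+2) => Qc n Q d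

def Qb (n : ℕ) (Q : A n) : ℕ → A n
  | 0 => 0
  | (d+1) => Qc n Q d

def gc (n : ℕ) (Q : A n) (u v : ℝ) (d : ℕ) : A n :=
  (LL n)^2 * Qa n Q d + MvPolynomial.C u * LL n * Qb n Q d + MvPolynomial.C v * Qc n Q d

lemma hom_cast {n : ℕ} {φ : A n} {a b : ℕ} (h : φ.IsHomogeneous a) (hab : a = b) :
    φ.IsHomogeneous b := hab ▸ h

lemma gc_zero (n : ℕ) (Q : A n) (u v : ℝ) :
    gc n Q u v 0 = MvPolynomial.C v * Qc n Q 0 := by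
  show (LL n)^2 * 0 + MvPolynomial.C u * LL n * 0 + MvPolynomial.C v * Qc n Q 0 = _
  ring

lemma gc_one (n : ℕ) (Q : A n) (u v : ℝ) :
    gc n Q u v 1 = MvPolynomial.C u * LL n * Qc n Q 0 + MvPolynomial.C v * Qc n Q 1 := by
  show (LL n)^2 * 0 + MvPolynomial.C u * LL n * Qc n Q 0 + MvPolynomial.C v * Qc n Q 1 = _
  ring

lemma gc_two (n : ℕ) (Q : A n) (u v : ℝ) (d : ℕ) :
    gc n Q u v (d+2) = (LL n)^2 * Qc n Q d + MvPolynomial.C u * LL n * Qc n Q (d+1)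
      + MvPolynomial.C v * Qc n Q (d+2) := rfl

lemma LL_hom (n : ℕ) : (LL n).IsHomogeneous 1 := by
  rw [LL]
  exact MvPolynomial.IsHomogeneous.sum _ _ _ (fun i _ => MvPolynomial.isHomogeneous_X _ _)

lemma gc_hom (n : ℕ) (Q : A n) (u v : ℝ) (d : ℕ) : (gc n Q u v d).IsHomogeneous d := by
  have hΛ := LL_hom n
  have hQc : ∀ d', (Qc n Q d').IsHomogeneous d' :=
    fun d' => MvPolynomial.homogeneousComponent_isHomogeneous d' Q
  match d with
  | 0 =>
    rw [gc_zero]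
    simpa using (MvPolynomial.isHomogeneous_C _ v).mul (hQc 0)
  | 1 =>
    rw [gc_one]
    apply MvPolynomial.IsHomogeneous.add
    · simpa using ((MvPolynomial.isHomogeneous_C _ u).mul hΛ).mul (hQc 0)
    · simpa using (MvPolynomial.isHomogeneous_C _ v).mul (hQc 1)
  | (d+2) =>
    rw [gc_two]
    apply MvPolynomial.IsHomogeneous.add
    apply MvPolynomial.IsHomogeneous.add
    · exact hom_cast ((hΛ.pow 2).mul (hQc d)) (by omega)
    · exact hom_cast (((MvPolynomial.isHomogeneous_C _ u).mul hΛ).mul (hQc (d+1))) (by omega)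
    · simpa using (MvPolynomial.isHomogeneous_C _ v).mul (hQc (d+2))

lemma sum_gc (n : ℕ) (Q : A n) (u v : ℝ) :
    ∑ d ∈ Finset.range (Q.totalDegree + 3), gc n Q u v d
      = Q * ((LL n)^2 + MvPolynomial.C u * LL n + MvPolynomial.C v) := by
  have hz1 : Qc n Q (Q.totalDegree+1) = 0 := by
    rw [Qc]; exact MvPolynomial.homogeneousComponent_eq_zero _ Q (by omega)
  have hz2 : Qc n Q (Q.totalDegree+2) = 0 := by
    rw [Qc]; exact MvPolynomial.homogeneousComponent_eq_zero _ Q (by omega)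
  set D := Q.totalDegree with hD
  have hz1 : Qc n Q (D+1) = 0 := hz1
  have hz2 : Qc n Q (D+2) = 0 := hz2
  have hQsum : ∑ d ∈ Finset.range (D+1), Qc n Q d = Q :=
    MvPolynomial.sum_homogeneousComponent Q
  have hA : ∑ d ∈ Finset.range (D+3), Qa n Q d = ∑ d ∈ Finset.range (D+1), Qc n Q d := by
    rw [Finset.sum_range_succ' (fun d => Qa n Q d) (D+2)]
    rw [Finset.sum_range_succ' (fun d => Qa n Q (d+1)) (D+1)]
    show (∑ d ∈ Finset.range (D+1), Qc n Q d) + 0 + 0 = _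
    rw [add_zero, add_zero]
  have hB : ∑ d ∈ Finset.range (D+3), Qb n Q d = Q := by
    rw [Finset.sum_range_succ' (fun d => Qb n Q d) (D+2)]
    show (∑ d ∈ Finset.range (D+2), Qc n Q d) + 0 = _
    rw [add_zero, Finset.sum_range_succ, hQsum, hz1, add_zero]
  have hC : ∑ d ∈ Finset.range (D+3), Qc n Q d = Q := by
    rw [Finset.sum_range_succ, Finset.sum_range_succ, hQsum, hz1, hz2]
    ring
  calc ∑ d ∈ Finset.range (D+3), gc n Q u v d
      = (LL n)^2 * (∑ d ∈ Finset.range (D+3), Qa n Q d)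
        + MvPolynomial.C u * LL n * (∑ d ∈ Finset.range (D+3), Qb n Q d)
        + MvPolynomial.C v * (∑ d ∈ Finset.range (D+3), Qc n Q d) := by
        rw [Finset.mul_sum, Finset.mul_sum, Finset.mul_sum, ← Finset.sum_add_distrib,
          ← Finset.sum_add_distrib]
        rfl
    _ = Q * ((LL n)^2 + MvPolynomial.C u * LL n + MvPolynomial.C v) := by
        rw [hA, hQsum, hB, hC]; ring

/-! ### helper lemmas about `gc` -/

lemma gc_low (n : ℕ) (Q : A n) (u v : ℝ) (w : ℕ) (hlow : ∀ d, d < w → Qc n Q d = 0) :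
    gc n Q u v w = MvPolynomial.C v * Qc n Q w := by
  match w with
  | 0 => exact gc_zero n Q u v
  | 1 => rw [gc_one, hlow 0 (by omega)]; ring
  | (d+2) => rw [gc_two, hlow d (by omega), hlow (d+1) (by omega)]; ring

lemma gc_top (n : ℕ) (Q : A n) (u v : ℝ) (D : ℕ) (hhigh : ∀ d, D < d → Qc n Q d = 0) :
    gc n Q u v (D+2) = (LL n)^2 * Qc n Q D := by
  rw [gc_two, hhigh (D+1) (by omega), hhigh (D+2) (by omega)]; ring

lemma LL_dvd_gc (n : ℕ) (Q : A n) (u v : ℝ) (w : ℕ) (hw : 1 ≤ w)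
    (hdvd : LL n ∣ Qc n Q w) : LL n ∣ gc n Q u v w := by
  match w with
  | 1 =>
    rw [gc_one]
    exact dvd_add ⟨MvPolynomial.C u * Qc n Q 0, by ring⟩ (hdvd.mul_left _)
  | (d+2) =>
    rw [gc_two]
    exact dvd_add (dvd_add ⟨LL n * Qc n Q d, by ring⟩
      ⟨MvPolynomial.C u * Qc n Q (d+1), by ring⟩) (hdvd.mul_left _)

lemma LL_dvd_gc_top1 (n : ℕ) (Q : A n) (u v : ℝ) (D : ℕ)
    (hhigh : ∀ d, D < d → Qc n Q d = 0) : LL n ∣ gc n Q u v (D+1) := by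
  match D with
  | 0 =>
    rw [gc_one, hhigh 1 (by omega), mul_zero, add_zero]
    exact ⟨MvPolynomial.C u * Qc n Q 0, by ring⟩
  | (D'+1) =>
    rw [show D'+1+1 = D'+2 from rfl, gc_two, hhigh (D'+2) (by omega), mul_zero, add_zero]
    exact ⟨LL n * Qc n Q D' + MvPolynomial.C u * Qc n Q (D'+1), by ring⟩

lemma succ_zero_eq (n : ℕ) (Q : A n) (u v : ℝ) (w : ℕ)
    (hlow : ∀ d, d < w → Qc n Q d = 0) (hz : gc n Q u v (w+1) = 0) :
    MvPolynomial.C u * LL n * Qc n Q w + MvPolynomial.C v * Qc n Q (w+1) = 0 := by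
  match w with
  | 0 => rw [gc_one] at hz; exact hz
  | (d+1) =>
    rw [show d+1+1 = d+2 from rfl, gc_two, hlow d (by omega), mul_zero, zero_add] at hz
    exact hz

/-- Claim 1: the forced structure of the components in the zero run below the top. -/
lemma claim1_ext (n : ℕ) (Q : A n) (s1 s2 : ℝ) (hΛ : LL n ≠ 0) (D t : ℕ)
    (hhigh : ∀ d, D < d → Qc n Q d = 0)
    (hrun : ∀ d, t < d → d < D+2 → gc n Q (s1+s2) (s1*s2) d = 0) :
    ∀ j, t + j ≤ D + 1 → j ≤ D →
      (LL n)^j * Qc n Q (D - j)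
        = MvPolynomial.C ((-1)^j * hh s1 s2 j) * Qc n Q D := by
  intro j
  induction j using Nat.strong_induction_on with
  | _ j IH =>
    match j with
    | 0 =>
      intro _ _
      rw [hh_zero]
      norm_num
    | 1 =>
      intro h1k h1D
      obtain ⟨D', hD'⟩ : ∃ D', D = D'+1 := ⟨D-1, by omega⟩
      have hz : gc n Q (s1+s2) (s1*s2) (D+1) = 0 := hrun (D+1) (by omega) (by omega)
      rw [show D+1 = D'+2 from by omega, gc_two,
        show D'+1 = D from by omega, show D'+2 = D+1 from by omega,
        hhigh (D+1) (by omega), mul_zero, add_zero] at hz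
      -- Λ^2 * Qc D' + C(s1+s2) Λ Qc D = 0
      have h4 : LL n * (LL n * Qc n Q D' + MvPolynomial.C (s1+s2) * Qc n Q D) = 0 := by
        rw [← hz]; ring
      rcases mul_eq_zero.mp h4 with h | h
      · exact absurd h hΛ
      · have h5 : LL n * Qc n Q D' = -(MvPolynomial.C (s1+s2) * Qc n Q D) :=
          eq_neg_of_add_eq_zero_left h
        rw [show D - 1 = D' from by omega, pow_one, h5, hh_one]
        rw [show ((-1:ℝ))^1 * (s1+s2) = -(s1+s2) from by ring, map_neg]
        ring
    | (j+2) =>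
      intro hjk hjD
      have hz : gc n Q (s1+s2) (s1*s2) (D-j) = 0 := hrun (D-j) (by omega) (by omega)
      obtain ⟨d', hd'⟩ : ∃ d', D - (j+2) = d' := ⟨D-(j+2), rfl⟩
      have hi1 : d' + 1 = D - (j+1) := by omega
      have hi2 : d' + 2 = D - j := by omega
      rw [← hi2, gc_two] at hz
      have e1 := IH (j+1) (by omega) (by omega) (by omega)
      have e2 := IH j (by omega) (by omega) (by omega)
      rw [← hi1] at e1
      rw [← hi2] at e2
      have h5 : (LL n)^2 * Qc n Q d'
          = -(MvPolynomial.C (s1+s2) * LL n * Qc n Q (d'+1)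
            + MvPolynomial.C (s1*s2) * Qc n Q (d'+2)) := by
        apply eq_neg_of_add_eq_zero_left
        rw [← add_assoc]
        exact hz
      have h4 : (LL n)^(j+2) * Qc n Q (D-(j+2))
          = (LL n)^j * ((LL n)^2 * Qc n Q d') := by
        rw [hd']; ring
      rw [h4, h5]
      have h6 : (LL n)^j * -(MvPolynomial.C (s1+s2) * LL n * Qc n Q (d'+1)
            + MvPolynomial.C (s1*s2) * Qc n Q (d'+2))
          = -(MvPolynomial.C (s1+s2) * ((LL n)^(j+1) * Qc n Q (d'+1))
            + MvPolynomial.C (s1*s2) * ((LL n)^j * Qc n Q (d'+2))) := by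
        ring
      rw [h6, e1, e2, hh_rec]
      simp only [map_mul, map_add, map_sub, map_neg, map_one, map_pow]
      ring

/-- The case `t = e` is impossible. -/
lemma branch_te (n : ℕ) (Q : A n) (s1 s2 : ℝ) (hs : 0 < s1*s2) (hσ : s1+s2 ≠ 0)
    (hΛ : LL n ≠ 0) (D t : ℕ)
    (hhigh : ∀ d, D < d → Qc n Q d = 0) (hQcD : Qc n Q D ≠ 0)
    (hlow : ∀ d, d < t → Qc n Q d = 0) (htD : t ≤ D)
    (hrun : ∀ d, t < d → d < D+2 → gc n Q (s1+s2) (s1*s2) d = 0) : False := by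
  have hz : gc n Q (s1+s2) (s1*s2) (t+1) = 0 := hrun (t+1) (by omega) (by omega)
  have hred := succ_zero_eq n Q (s1+s2) (s1*s2) t hlow hz
  rcases Nat.eq_or_lt_of_le htD with heq | hlt
  · -- t = D
    rw [heq, hhigh (D+1) (by omega), mul_zero, add_zero] at hred
    rcases mul_eq_zero.mp hred with h | h
    · rcases mul_eq_zero.mp h with h' | h'
      · exact hσ (MvPolynomial.C_eq_zero.mp h')
      · exact hΛ h'
    · exact hQcD h
  · -- t < D
    obtain ⟨k', hk'⟩ : ∃ k', k' = D - t - 1 := ⟨D - t - 1, rfl⟩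
    have e1 := claim1_ext n Q s1 s2 hΛ D t hhigh hrun (k'+1) (by omega) (by omega)
    have e2 := claim1_ext n Q s1 s2 hΛ D t hhigh hrun k' (by omega) (by omega)
    rw [show D - (k'+1) = t from by omega] at e1
    rw [show D - k' = t+1 from by omega] at e2
    have h3 : MvPolynomial.C (s1+s2) * ((LL n)^(k'+1) * Qc n Q t)
        + MvPolynomial.C (s1*s2) * ((LL n)^k' * Qc n Q (t+1)) = 0 := by
      have h0 : (LL n)^k' * (MvPolynomial.C (s1+s2) * LL n * Qc n Q t
          + MvPolynomial.C (s1*s2) * Qc n Q (t+1)) = 0 := by rw [hred, mul_zero]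
      rw [← h0]; ring
    rw [e1, e2] at h3
    have h5 : MvPolynomial.C ((s1+s2) * ((-1)^(k'+1) * hh s1 s2 (k'+1))
        + (s1*s2) * ((-1)^k' * hh s1 s2 k')) * Qc n Q D = 0 := by
      rw [← h3]
      simp only [map_mul, map_add, map_sub, map_neg, map_one, map_pow]
      ring
    rcases mul_eq_zero.mp h5 with h | h
    · rw [MvPolynomial.C_eq_zero] at h
      have h6 : ((-1:ℝ))^(k'+1) * ((s1+s2) * hh s1 s2 (k'+1) - (s1*s2) * hh s1 s2 k') = 0 := by
        rw [← h]; ring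
      rw [← hh_rec] at h6
      rcases mul_eq_zero.mp h6 with h' | h'
      · exact absurd h' (pow_ne_zero _ (by norm_num))
      · exact hh_ne s1 s2 hs (k'+2) h'
    · exact hQcD h

/-- In the case `1 ≤ t ≤ D`, the component at degree `t` is divisible by `LL n`. -/
lemma branch_lt (n : ℕ) (Q : A n) (s1 s2 : ℝ) (hs : 0 < s1*s2) (hΛ : LL n ≠ 0) (D t : ℕ)
    (hhigh : ∀ d, D < d → Qc n Q d = 0)
    (htD : t ≤ D) (ht1 : 1 ≤ t)
    (hrun : ∀ d, t < d → d < D+2 → gc n Q (s1+s2) (s1*s2) d = 0) :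
    LL n ∣ Qc n Q t := by
  obtain ⟨k', hk'⟩ : ∃ k', k' = D - t := ⟨D - t, rfl⟩
  have e1 := claim1_ext n Q s1 s2 hΛ D t hhigh hrun (k'+1) (by omega) (by omega)
  have e2 := claim1_ext n Q s1 s2 hΛ D t hhigh hrun k' (by omega) (by omega)
  rw [show D - (k'+1) = t - 1 from by omega] at e1
  rw [show D - k' = t from by omega] at e2
  have h3 : (LL n)^k' * (MvPolynomial.C (hh s1 s2 (k'+1)) * Qc n Q t
      + MvPolynomial.C (hh s1 s2 k') * LL n * Qc n Q (t-1)) = 0 := by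
    have hexp : (LL n)^k' * (MvPolynomial.C (hh s1 s2 (k'+1)) * Qc n Q t
        + MvPolynomial.C (hh s1 s2 k') * LL n * Qc n Q (t-1))
        = MvPolynomial.C (hh s1 s2 (k'+1)) * ((LL n)^k' * Qc n Q t)
          + MvPolynomial.C (hh s1 s2 k') * ((LL n)^(k'+1) * Qc n Q (t-1)) := by ring
    rw [hexp, e1, e2]
    simp only [map_mul, map_add, map_sub, map_neg, map_one, map_pow]
    ring
  have h4 : MvPolynomial.C (hh s1 s2 (k'+1)) * Qc n Q t
      = -(MvPolynomial.C (hh s1 s2 k') * LL n * Qc n Q (t-1)) := by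
    rcases mul_eq_zero.mp h3 with h | h
    · exact absurd h (pow_ne_zero _ hΛ)
    · exact eq_neg_of_add_eq_zero_left h
  have hCne : hh s1 s2 (k'+1) ≠ 0 := hh_ne _ _ hs _
  refine ⟨MvPolynomial.C ((hh s1 s2 (k'+1))⁻¹)
    * (-(MvPolynomial.C (hh s1 s2 k') * Qc n Q (t-1))), ?_⟩
  calc Qc n Q t
      = MvPolynomial.C ((hh s1 s2 (k'+1))⁻¹)
        * (MvPolynomial.C (hh s1 s2 (k'+1)) * Qc n Q t) := by
        rw [← mul_assoc, ← map_mul, inv_mul_cancel₀ hCne, map_one, one_mul]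
    _ = MvPolynomial.C ((hh s1 s2 (k'+1))⁻¹)
        * -(MvPolynomial.C (hh s1 s2 k') * LL n * Qc n Q (t-1)) := by rw [h4]
    _ = LL n * (MvPolynomial.C ((hh s1 s2 (k'+1))⁻¹)
        * (-(MvPolynomial.C (hh s1 s2 k') * Qc n Q (t-1)))) := by ring

theorem main (n : ℕ) (hn : 1 ≤ n) (s1 s2 : ℝ) (hs1 : s1 ≠ 0) (hs2 : s2 ≠ 0)
    (hs : 0 < s1 * s2) (Q : A n) (hQ : Q ≠ 0) :
    (n + 2).choose 2 ≤
      (Q * (LL n + MvPolynomial.C s1) * (LL n + MvPolynomial.C s2)).support.card := by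
  classical
  have hσ : s1 + s2 ≠ 0 := by
    rcases mul_pos_iff.mp hs with ⟨h1, h2⟩ | ⟨h1, h2⟩
    · positivity
    · have h3 : s1 + s2 < 0 := by linarith
      exact h3.ne
  have hp : s1 * s2 ≠ 0 := hs.ne'
  have hΛ : LL n ≠ 0 := LL_ne_zero hn
  set D : ℕ := Q.totalDegree with hD
  -- f equals the sum of the slices
  have hfact : (LL n + MvPolynomial.C s1) * (LL n + MvPolynomial.C s2)
      = (LL n)^2 + MvPolynomial.C (s1+s2) * LL n + MvPolynomial.C (s1*s2) := by
    rw [map_add, map_mul]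
    ring
  have hF : Q * (LL n + MvPolynomial.C s1) * (LL n + MvPolynomial.C s2)
      = ∑ d ∈ Finset.range (D+3), gc n Q (s1+s2) (s1*s2) d := by
    rw [mul_assoc, hfact, ← sum_gc n Q (s1+s2) (s1*s2)]
  -- top component of Q is nonzero
  have hQcD : Qc n Q D ≠ 0 := by
    obtain ⟨α, hα_mem, hα_deg⟩ := Finset.exists_mem_eq_sup Q.support
      (MvPolynomial.support_nonempty.mpr hQ) (fun s => s.sum fun _ e => e)
    have hdeg : α.degree = D := by
      rw [hD, MvPolynomial.totalDegree, hα_deg]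
      rfl
    intro h0
    have hc : MvPolynomial.coeff α (Qc n Q D) = MvPolynomial.coeff α Q := by
      rw [Qc, MvPolynomial.coeff_homogeneousComponent, if_pos hdeg]
    rw [h0, MvPolynomial.coeff_zero] at hc
    exact (MvPolynomial.mem_support_iff.mp hα_mem) hc.symm
  have hhigh : ∀ d, D < d → Qc n Q d = 0 := by
    intro d hd
    rw [Qc]
    exact MvPolynomial.homogeneousComponent_eq_zero _ Q hd
  -- the minimal degree e
  have hDQne : ((Finset.range (D+1)).filter (fun d => Qc n Q d ≠ 0)).Nonempty :=
    ⟨D, Finset.mem_filter.mpr ⟨Finset.mem_range.mpr (by omega), hQcD⟩⟩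
  set e : ℕ := ((Finset.range (D+1)).filter (fun d => Qc n Q d ≠ 0)).min' hDQne with he
  have he_mem := Finset.min'_mem _ hDQne
  rw [← he, Finset.mem_filter, Finset.mem_range] at he_mem
  have hQce : Qc n Q e ≠ 0 := he_mem.2
  have heD : e ≤ D := by omega
  have hlow : ∀ d, d < e → Qc n Q d = 0 := by
    intro d hd
    by_contra hne
    have hmem : d ∈ (Finset.range (D+1)).filter (fun d => Qc n Q d ≠ 0) :=
      Finset.mem_filter.mpr ⟨Finset.mem_range.mpr (by omega), hne⟩
    have := Finset.min'_le _ d hmem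
    omega
  -- key slices
  have hgD2 : gc n Q (s1+s2) (s1*s2) (D+2) = (LL n)^2 * Qc n Q D := gc_top n Q _ _ D hhigh
  have hgD2ne : gc n Q (s1+s2) (s1*s2) (D+2) ≠ 0 := by
    rw [hgD2]
    exact mul_ne_zero (pow_ne_zero 2 hΛ) hQcD
  have hge : gc n Q (s1+s2) (s1*s2) e = MvPolynomial.C (s1*s2) * Qc n Q e :=
    gc_low n Q _ _ e hlow
  have hgene : gc n Q (s1+s2) (s1*s2) e ≠ 0 := by
    rw [hge]
    exact mul_ne_zero (by rw [Ne, MvPolynomial.C_eq_zero]; exact hp) hQce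
  -- the second highest nonzero slice t
  have heDf : e ∈ (((Finset.range (D+3)).filter
      (fun d => gc n Q (s1+s2) (s1*s2) d ≠ 0)).erase (D+2)) := by
    rw [Finset.mem_erase, Finset.mem_filter, Finset.mem_range]
    exact ⟨by omega, by omega, hgene⟩
  set t : ℕ := (((Finset.range (D+3)).filter
      (fun d => gc n Q (s1+s2) (s1*s2) d ≠ 0)).erase (D+2)).max' ⟨e, heDf⟩ with ht
  have ht_mem := Finset.max'_mem _ (⟨e, heDf⟩ :
    (((Finset.range (D+3)).filter (fun d => gc n Q (s1+s2) (s1*s2) d ≠ 0)).erase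
      (D+2)).Nonempty)
  rw [← ht, Finset.mem_erase, Finset.mem_filter, Finset.mem_range] at ht_mem
  have htne : t ≠ D+2 := ht_mem.1
  have htD1 : t ≤ D+1 := by omega
  have hgtne : gc n Q (s1+s2) (s1*s2) t ≠ 0 := ht_mem.2.2
  have het : e ≤ t := Finset.le_max' _ e heDf
  have hrun : ∀ d, t < d → d < D+2 → gc n Q (s1+s2) (s1*s2) d = 0 := by
    intro d h1 h2
    by_contra hne
    have hmem : d ∈ (((Finset.range (D+3)).filter
        (fun d => gc n Q (s1+s2) (s1*s2) d ≠ 0)).erase (D+2)) := by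
      rw [Finset.mem_erase, Finset.mem_filter, Finset.mem_range]
      exact ⟨by omega, by omega, hne⟩
    have := Finset.le_max' _ d hmem
    omega
  -- e ≠ t
  have het' : e < t := by
    rcases Nat.eq_or_lt_of_le het with heq | h
    · exfalso
      refine branch_te n Q s1 s2 hs hσ hΛ D t hhigh hQcD ?_ ?_ hrun
      · intro d hd
        exact hlow d (by omega)
      · -- t ≤ D: if t = D + 1 then run is empty and e = t = D+1 > D contradiction
        rcases Nat.lt_or_ge t (D+1) with h' | h'
        · omega
        · omega
    · exact h
  -- t ≤ D+1; divisibility of g t by LL n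
  have hdvdgt : LL n ∣ gc n Q (s1+s2) (s1*s2) t := by
    rcases Nat.lt_or_ge t (D+1) with h' | h'
    · -- t ≤ D, and 1 ≤ t since e < t
      exact LL_dvd_gc n Q _ _ t (by omega)
        (branch_lt n Q s1 s2 hs hΛ D t hhigh (by omega) (by omega) hrun)
    · have ht' : t = D+1 := by omega
      rw [ht']
      exact LL_dvd_gc_top1 n Q _ _ D hhigh
  -- cardinality bounds
  have h_top : (n+1).choose 2 ≤ (gc n Q (s1+s2) (s1*s2) (D+2)).support.card := by
    apply SQ n _ hgD2ne
    rw [hgD2]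
    exact Dvd.intro _ rfl
  have h_mid : n ≤ (gc n Q (s1+s2) (s1*s2) t).support.card := H1 n _ hgtne hdvdgt
  have h_bot : 1 ≤ (gc n Q (s1+s2) (s1*s2) e).support.card :=
    Finset.card_pos.mpr (MvPolynomial.support_nonempty.mpr hgene)
  -- supports are contained in the support of f
  have hsub : ∀ d, d ∈ Finset.range (D+3) →
      (gc n Q (s1+s2) (s1*s2) d).support ⊆
        (Q * (LL n + MvPolynomial.C s1) * (LL n + MvPolynomial.C s2)).support := by
    intro d hd α hα
    have hαd : α.degree = d := by
      by_contra hk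
      exact MvPolynomial.mem_support_iff.mp hα ((gc_hom n Q _ _ d).coeff_eq_zero hk)
    rw [MvPolynomial.mem_support_iff, hF, MvPolynomial.coeff_sum]
    rw [Finset.sum_eq_single_of_mem d hd (fun d' _ hne =>
      (gc_hom n Q _ _ d').coeff_eq_zero (by rw [hαd]; exact (Ne.symm hne)))]
    exact MvPolynomial.mem_support_iff.mp hα
  -- disjointness
  have hdisj : ∀ d d' : ℕ, d ≠ d' →
      Disjoint ((gc n Q (s1+s2) (s1*s2) d).support)
        ((gc n Q (s1+s2) (s1*s2) d').support) := by
    intro d d' hne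
    rw [Finset.disjoint_left]
    intro α h1 h2
    have hd1 : α.degree = d := by
      by_contra hk
      exact MvPolynomial.mem_support_iff.mp h1 ((gc_hom n Q _ _ d).coeff_eq_zero hk)
    have hd2 : α.degree = d' := by
      by_contra hk
      exact MvPolynomial.mem_support_iff.mp h2 ((gc_hom n Q _ _ d').coeff_eq_zero hk)
    omega
  -- assemble
  have hU : ((gc n Q (s1+s2) (s1*s2) e).support ∪ (gc n Q (s1+s2) (s1*s2) t).support
      ∪ (gc n Q (s1+s2) (s1*s2) (D+2)).support) ⊆
      (Q * (LL n + MvPolynomial.C s1) * (LL n + MvPolynomial.C s2)).support := by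
    apply Finset.union_subset
    apply Finset.union_subset
    · exact hsub e (Finset.mem_range.mpr (by omega))
    · exact hsub t (Finset.mem_range.mpr (by omega))
    · exact hsub (D+2) (Finset.mem_range.mpr (by omega))
  have hcard : (gc n Q (s1+s2) (s1*s2) e).support.card
      + (gc n Q (s1+s2) (s1*s2) t).support.card
      + (gc n Q (s1+s2) (s1*s2) (D+2)).support.card ≤
      (Q * (LL n + MvPolynomial.C s1) * (LL n + MvPolynomial.C s2)).support.card := by
    have h1 : Disjoint (gc n Q (s1+s2) (s1*s2) e).support
        (gc n Q (s1+s2) (s1*s2) t).support := hdisj _ _ (by omega)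
    have h2 : Disjoint ((gc n Q (s1+s2) (s1*s2) e).support
        ∪ (gc n Q (s1+s2) (s1*s2) t).support)
        (gc n Q (s1+s2) (s1*s2) (D+2)).support := by
      rw [Finset.disjoint_union_left]
      exact ⟨hdisj _ _ (by omega), hdisj _ _ (by omega)⟩
    calc (gc n Q (s1+s2) (s1*s2) e).support.card
        + (gc n Q (s1+s2) (s1*s2) t).support.card
        + (gc n Q (s1+s2) (s1*s2) (D+2)).support.card
        = ((gc n Q (s1+s2) (s1*s2) e).support ∪ (gc n Q (s1+s2) (s1*s2) t).support
            ∪ (gc n Q (s1+s2) (s1*s2) (D+2)).support).card := by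
          rw [Finset.card_union_of_disjoint h2, Finset.card_union_of_disjoint h1]
      _ ≤ _ := Finset.card_le_card hU
  have hch : (n+2).choose 2 = (n+1) + (n+1).choose 2 := by
    rw [Nat.choose_succ_succ, Nat.choose_one_right]
  rw [hch]
  generalize hK : (n+1).choose 2 = K at h_top
  omega

end

end DiagRank

open scoped BigOperators

/-- **Diagonal version of the Hermitian rank bound.** If `s₁, s₂` are nonzero reals of the
same sign and `Q ∈ ℝ[x₁,…,xₙ]` is nonzero, then `Q·(x₁+⋯+xₙ+s₁)·(x₁+⋯+xₙ+s₂)` has at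
least `(n+2 choose 2)` monomials with nonzero coefficient. -/
theorem diagonal_rank_bound (n : ℕ) (hn : 1 ≤ n) (s1 s2 : ℝ)
    (hs1 : s1 ≠ 0) (hs2 : s2 ≠ 0) (hs : 0 < s1 * s2)
    (Q : MvPolynomial (Fin n) ℝ) (hQ : Q ≠ 0) :
    (n + 2).choose 2 ≤
      (Q * ((∑ i, MvPolynomial.X i) + MvPolynomial.C s1) *
        ((∑ i, MvPolynomial.X i) + MvPolynomial.C s2)).support.card :=
  DiagRank.main n hn s1 s2 hs1 hs2 hs Q hQ
end

section
/- Let s₁ and s₂ be nonzero real numbers with s₁·s₂ > 0, and let Q be a nonzero univariate real polynomial. Then the polynomial Q(x)·(x+s₁)·(x+s₂) has at least 3 nonzero coefficients; that is, its support has cardinality at least 3. -/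
open Polynomial

/-- **One-variable diagonal bound.** If `s₁, s₂` are nonzero reals of the same sign and
`Q ∈ ℝ[x]` is nonzero, then `Q(x)·(x+s₁)·(x+s₂)` has at least 3 nonzero coefficients. -/
theorem one_variable_support_bound (s1 s2 : ℝ) (hs1 : s1 ≠ 0) (hs2 : s2 ≠ 0)
    (hs : 0 < s1 * s2) (Q : Polynomial ℝ) (hQ : Q ≠ 0) :
    3 ≤ (Q * (Polynomial.X + Polynomial.C s1) *
      (Polynomial.X + Polynomial.C s2)).support.card := by
  set P := Q * (X + C s1) * (X + C s2) with hPdef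
  have hP : P ≠ 0 := by
    apply mul_ne_zero (mul_ne_zero hQ (X_add_C_ne_zero s1)) (X_add_C_ne_zero s2)
  have hev1 : P.eval (-s1) = 0 := by simp [hPdef]
  have hev2 : P.eval (-s2) = 0 := by simp [hPdef]
  by_contra hcard
  push_neg at hcard
  interval_cases h : P.support.card
  · exact hP (Polynomial.card_support_eq_zero.mp h)
  · obtain ⟨k, x, hx, hPeq⟩ := Polynomial.card_support_eq_one.mp h
    rw [hPeq] at hev1
    simp at hev1
    rcases hev1 with h1 | h1
    · exact hx h1
    · exact hs1 h1.1
  · obtain ⟨k, m, hkm, a, b, ha, hb, hPeq⟩ := Polynomial.card_support_eq_two.mp h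
    rw [hPeq] at hev1 hev2
    simp at hev1 hev2
    set d := m - k with hd
    have hmd : m = k + d := by omega
    have hdpos : 0 < d := by omega
    have key : ∀ t : ℝ, t ≠ 0 → a * t ^ k + b * t ^ m = 0 → a + b * t ^ d = 0 := by
      intro t ht hteq
      have h0 : t ^ k * (a + b * t ^ d) = 0 := by
        rw [hmd] at hteq; ring_nf at hteq ⊢; linarith [hteq]
      rcases mul_eq_zero.mp h0 with h' | h'
      · exact absurd (pow_eq_zero_iff'.mp h').1 ht
      · exact h'
    have h1 := key (-s1) (neg_ne_zero.mpr hs1) hev1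
    have h2 := key (-s2) (neg_ne_zero.mpr hs2) hev2
    have heq : (-s1) ^ d = (-s2) ^ d :=
      mul_left_cancel₀ hb (by linarith)
    have hss : s1 = s2 := by
      have habs : |s1| = |s2| := by
        have h' : |(-s1)| ^ d = |(-s2)| ^ d := by rw [← abs_pow, ← abs_pow, heq]
        simpa using (pow_left_inj₀ (abs_nonneg _) (abs_nonneg _) (by omega)).mp h'
      rcases abs_eq_abs.mp habs with h' | h'
      · exact h'
      · exfalso; rw [h'] at hs; nlinarith [sq_nonneg s2]
    subst hss
    -- now -s1 is a double root of P, so derivative vanishes there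
    have hder : (Polynomial.derivative P).eval (-s1) = 0 := by
      rw [hPdef]
      simp [Polynomial.derivative_mul]
    rw [hPeq] at hder
    simp [Polynomial.derivative_mul, Polynomial.derivative_C_mul_X_pow, Polynomial.derivative_X_pow] at hder
    set t := -s1 with ht
    have htne : t ≠ 0 := neg_ne_zero.mpr hs1
    have htd : t ^ d ≠ 0 := pow_ne_zero _ htne
    rcases Nat.eq_zero_or_pos k with hk0 | hkpos
    · subst hk0
      simp at hder
      rcases hder with h' | h' | h'
      · exact hb h'
      · omega
      · exact htne h'.1
    · have hm1 : m - 1 = (k - 1) + d := by omega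
      have h0 : t ^ (k-1) * (a * ↑k + b * ↑m * t ^ d) = 0 := by
        rw [hm1] at hder; ring_nf at hder ⊢; linarith
      have h0' : a * ↑k + b * ↑m * t ^ d = 0 := by
        rcases mul_eq_zero.mp h0 with h' | h'
        · exact absurd (pow_eq_zero_iff'.mp h').1 htne
        · exact h'
      have ha' : a = -(b * t ^ d) := by linarith
      have hzz : b * t ^ d * ((m:ℝ) - k) = 0 := by
        rw [ha'] at h0'; ring_nf at h0' ⊢; linarith
      have hkm' : (k:ℝ) < m := by exact_mod_cast hkm
      have hne : b * t ^ d * ((m:ℝ) - k) ≠ 0 :=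
        mul_ne_zero (mul_ne_zero hb htd) (by linarith)
      exact hne hzz
end
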